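/- arXiv:2304.04932 — 7 statements merged into one kernel-verified Lean document; each statement's English description precedes it below -/
import Mathlib

section
/- Let u, v ∈ ℝⁿ (or ℂⁿ) be nonzero vectors, ε ∈ [0,1], and let p_u(i) = |u(i)|²/‖u‖² be the length-squared distribution of u. Let p̃ be any probability distribution on {1,…,n} with total variation distance at most ε from p_u. Let ṽ ≥ ‖v‖ be a known bound, and define Γ = {i : |v(i)| ≥ (ṽ/(√(2ε)‖u‖))·|u(i)|}. Define the random variable X by sampling i ~ p̃ and outputting 0 if i ∈ Γ, and v(i)*‖u‖²/u(i)* otherwise. Then |E[X] − ⟨u,v⟩| ≤ 2√(2ε)·‖u‖·ṽ. -/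
/-!
Since `p_u(i) · v(i)* ‖u‖² / u(i)* = u(i) v(i)*`, the bias splits into the truncated part
`-∑_{i ∈ Γ} u(i) v(i)*` and the distribution error `∑_{i ∉ Γ} (p̃(i) - p_u(i)) X(i)`.
On `Γ` we have `|u(i)| |v(i)| ≤ (√(2ε) ‖u‖ / ṽ) |v(i)|²`, and off `Γ` we have
`|X(i)| < ‖u‖ ṽ / √(2ε)`; together with `∑ |v(i)|² ≤ ṽ²` and `∑ |p̃(i) - p_u(i)| ≤ 2ε`,
each part is at most `√(2ε) ‖u‖ ṽ`.
-/

open Finset ComplexConjugate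

theorem sum_mul_le_mul_of_sum_le_sq {ι : Type*} {S : Finset ι} {x w : ι → ℝ} {s c : ℝ}
    (hs : 0 ≤ s) (hc : 0 ≤ c) (hx : ∀ i ∈ S, 0 ≤ x i) (hsum : ∑ i ∈ S, x i ≤ s ^ 2)
    (hw : ∀ i ∈ S, s * w i ≤ c) :
    ∑ i ∈ S, x i * w i ≤ s * c := by
  rcases hs.eq_or_lt with rfl | hs
  · have hx0 : ∀ i ∈ S, x i = 0 :=
      (sum_eq_zero_iff_of_nonneg hx).mp (le_antisymm (by simpa using hsum) (sum_nonneg hx))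
    rw [sum_eq_zero fun i hi => by rw [hx0 i hi, zero_mul], zero_mul]
  · calc ∑ i ∈ S, x i * w i ≤ ∑ i ∈ S, x i * (c / s) :=
          sum_le_sum fun i hi => mul_le_mul_of_nonneg_left
            ((le_div_iff₀ hs).mpr (by linarith [hw i hi])) (hx i hi)
      _ = (∑ i ∈ S, x i) * (c / s) := (sum_mul ..).symm
      _ ≤ s ^ 2 * (c / s) := by gcongr
      _ = s * c := by field_simp

section

variable {𝕜 : Type*} [RCLike 𝕜]

theorem ofReal_sub_norm_sq_div_mul_eq {ν : ℝ} (hν : ν ≠ 0) (p : ℝ) {a : 𝕜} (ha : a ≠ 0) (b : 𝕜) :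
    ((p - ‖a‖ ^ 2 / ν ^ 2 : ℝ) : 𝕜) * (conj b * (ν : 𝕜) ^ 2 / conj a)
      = (p : 𝕜) * (conj b * (ν : 𝕜) ^ 2 / conj a) - a * conj b := by
  have hνc : (ν : 𝕜) ≠ 0 := RCLike.ofReal_ne_zero.mpr hν
  have hca : conj a ≠ 0 := (map_ne_zero _).mpr ha
  push_cast
  rw [← RCLike.mul_conj]
  field_simp

theorem norm_conj_mul_div_conj (a b : 𝕜) (ν : ℝ) :
    ‖conj b * (ν : 𝕜) ^ 2 / conj a‖ = ‖b‖ * ν ^ 2 / ‖a‖ := by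
  simp [norm_pow]

variable {ι : Type*} [Fintype ι]

theorem sum_ite_sub_sum_mul_conj_eq (u v : ι → 𝕜) (p : ι → ℝ) {ν : ℝ}
    (hν : ν ^ 2 = ∑ i, ‖u i‖ ^ 2) (P : ι → Prop) [DecidablePred P]
    (hP : ∀ i, ¬ P i → u i ≠ 0) :
    (∑ i, if P i then 0 else (p i : 𝕜) * (conj (v i) * (ν : 𝕜) ^ 2 / conj (u i)))
        - ∑ i, u i * conj (v i)
      = ∑ i with ¬ P i,
            ((p i - ‖u i‖ ^ 2 / ν ^ 2 : ℝ) : 𝕜) * (conj (v i) * (ν : 𝕜) ^ 2 / conj (u i))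
        - ∑ i with P i, u i * conj (v i) := by
  have hν0 : ∀ i, ¬ P i → ν ≠ 0 := by
    rintro i hi rfl
    have : ‖u i‖ ^ 2 ≤ 0 ^ 2 := hν ▸ single_le_sum (fun j _ => sq_nonneg ‖u j‖) (mem_univ i)
    exact hP i hi (by simpa using this)
  rw [sum_ite, sum_const_zero, zero_add, ← sum_filter_add_sum_filter_not univ P,
    sum_congr rfl fun i hi => ofReal_sub_norm_sq_div_mul_eq (hν0 i (mem_filter.mp hi).2) (p i)
      (hP i (mem_filter.mp hi).2) (v i), sum_sub_distrib]
  ring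

theorem norm_sum_filter_mul_conj_le (u v : ι → 𝕜) {a c : ℝ} (ha : 0 ≤ a) (hc : 0 ≤ c)
    (hv : ∑ i, ‖v i‖ ^ 2 ≤ c ^ 2) :
    ‖∑ i with c * ‖u i‖ ≤ a * ‖v i‖, u i * conj (v i)‖ ≤ c * a := by
  refine (norm_sum_le _ _).trans ?_
  calc ∑ i with c * ‖u i‖ ≤ a * ‖v i‖, ‖u i * conj (v i)‖
      = ∑ i with c * ‖u i‖ ≤ a * ‖v i‖, ‖v i‖ ^ 2 * (‖u i‖ / ‖v i‖) := by
        refine sum_congr rfl fun i _ => ?_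
        rw [norm_mul, RCLike.norm_conj]
        rcases (norm_nonneg (v i)).eq_or_lt with h | h
        · simp [← h]
        · field_simp
    _ ≤ c * a := by
      refine sum_mul_le_mul_of_sum_le_sq hc ha (fun i _ => sq_nonneg _)
        ((sum_le_sum_of_subset_of_nonneg (filter_subset _ _) fun i _ _ => sq_nonneg _).trans hv)
        fun i hi => ?_
      rcases (norm_nonneg (v i)).eq_or_lt with h | h
      · simp [← h, ha]
      · rw [mul_div_assoc', div_le_iff₀ h]
        exact (mem_filter.mp hi).2

theorem norm_sum_filter_not_mul_le (u v : ι → 𝕜) (d : ι → ℝ) {s ν c : ℝ} (hs : 0 ≤ s)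
    (hν : 0 ≤ ν) (hc : 0 ≤ c) (hd : ∑ i, |d i| ≤ s ^ 2) :
    ‖∑ i with ¬ c * ‖u i‖ ≤ s * ν * ‖v i‖, (d i : 𝕜) * (conj (v i) * (ν : 𝕜) ^ 2 / conj (u i))‖
      ≤ s * (ν * c) := by
  refine (norm_sum_le _ _).trans ?_
  simp only [norm_mul, RCLike.norm_ofReal, norm_conj_mul_div_conj]
  refine sum_mul_le_mul_of_sum_le_sq hs (by positivity) (fun i _ => abs_nonneg _)
    ((sum_le_sum_of_subset_of_nonneg (filter_subset _ _) fun i _ _ => abs_nonneg _).trans hd)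
    fun i hi => ?_
  have hlt : s * ν * ‖v i‖ < c * ‖u i‖ := not_le.mp (mem_filter.mp hi).2
  have hu : 0 < ‖u i‖ := pos_of_mul_pos_right ((by positivity : 0 ≤ s * ν * ‖v i‖).trans_lt hlt) hc
  rw [mul_div_assoc', div_le_iff₀ hu]
  nlinarith

end

theorem robust_inner_product_bias_general
    (n : ℕ) (u v : Fin n → ℂ)
    (ε : ℝ)
    (ptilde : Fin n → ℝ)
    (nu : ℝ) (hnu : nu = Real.sqrt (∑ i, ‖u i‖ ^ 2))
    (hTV : (1/2) * ∑ i, |ptilde i - ‖u i‖ ^ 2 / nu ^ 2| ≤ ε)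
    (vtilde : ℝ) (hvtilde : Real.sqrt (∑ i, ‖v i‖ ^ 2) ≤ vtilde) :
    ‖(∑ i, if vtilde * ‖u i‖ ≤ Real.sqrt (2 * ε) * nu * ‖v i‖ then (0:ℂ)
        else (ptilde i : ℂ) * ((starRingEnd ℂ) (v i) * (nu:ℂ) ^ 2 / (starRingEnd ℂ) (u i)))
      - ∑ i, u i * (starRingEnd ℂ) (v i)‖
      ≤ 2 * Real.sqrt (2 * ε) * nu * vtilde := by
  have hTV' : ∑ i, |ptilde i - ‖u i‖ ^ 2 / nu ^ 2| ≤ Real.sqrt (2 * ε) ^ 2 := by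
    have hdist : 0 ≤ ∑ i, |ptilde i - ‖u i‖ ^ 2 / nu ^ 2| := sum_nonneg fun i _ => abs_nonneg _
    rw [Real.sq_sqrt (by linarith)]
    linarith
  have hnu0 : 0 ≤ nu := hnu ▸ Real.sqrt_nonneg _
  have hnu2 : nu ^ 2 = ∑ i, ‖u i‖ ^ 2 := hnu ▸ Real.sq_sqrt (sum_nonneg fun i _ => sq_nonneg _)
  obtain ⟨hvt0, hvt2⟩ := Real.sqrt_le_iff.mp hvtilde
  have hoff : ∀ i, ¬ vtilde * ‖u i‖ ≤ Real.sqrt (2 * ε) * nu * ‖v i‖ → u i ≠ 0 := by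
    intro i h hu
    exact h (by rw [hu, norm_zero, mul_zero]; positivity)
  calc _ = ‖_ - _‖ := congrArg norm (sum_ite_sub_sum_mul_conj_eq u v ptilde hnu2 _ hoff)
    _ ≤ _ := norm_sub_le _ _
    _ ≤ Real.sqrt (2 * ε) * (nu * vtilde) + vtilde * (Real.sqrt (2 * ε) * nu) :=
        add_le_add (norm_sum_filter_not_mul_le u v _ (Real.sqrt_nonneg _) hnu0 hvt0 hTV')
          (norm_sum_filter_mul_conj_le u v (by positivity) hvt0 hvt2)
    _ = _ := by ring

/-- **Robust inner product estimator, bias bound.**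
For nonzero `u v : ℂⁿ`, `ε ∈ [0,1]`, a distribution `p̃` within total variation `ε` of the
length-squared distribution `p_u`, and a known bound `ṽ ≥ ‖v‖`, define
`Γ = {i : |v i| ≥ (ṽ/(√(2ε)·‖u‖))·|u i|}` (written multiplied out) and the estimator `X`
that samples `i ~ p̃` and outputs `0` if `i ∈ Γ` and `v(i)* ‖u‖² / u(i)*` otherwise.
Then `|E[X] − ⟨u,v⟩| ≤ 2√(2ε)·‖u‖·ṽ`. -/
theorem robust_inner_product_bias
    (n : ℕ) (u v : Fin n → ℂ) (hu : u ≠ 0) (hv : v ≠ 0)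
    (ε : ℝ) (hε : ε ∈ Set.Icc (0:ℝ) 1)
    (ptilde : Fin n → ℝ)
    (hpt_nonneg : ∀ i, 0 ≤ ptilde i) (hpt_sum : ∑ i, ptilde i = 1)
    (nu : ℝ) (hnu : nu = Real.sqrt (∑ i, ‖u i‖ ^ 2))
    (hTV : (1/2) * ∑ i, |ptilde i - ‖u i‖ ^ 2 / nu ^ 2| ≤ ε)
    (vtilde : ℝ) (hvtilde : Real.sqrt (∑ i, ‖v i‖ ^ 2) ≤ vtilde) :
    ‖(∑ i, if vtilde * ‖u i‖ ≤ Real.sqrt (2 * ε) * nu * ‖v i‖ then (0:ℂ)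
        else (ptilde i : ℂ) * ((starRingEnd ℂ) (v i) * (nu:ℂ) ^ 2 / (starRingEnd ℂ) (u i)))
      - ∑ i, u i * (starRingEnd ℂ) (v i)‖
      ≤ 2 * Real.sqrt (2 * ε) * nu * vtilde :=
  robust_inner_product_bias_general n u v ε ptilde nu hnu hTV vtilde hvtilde
end

section
/- With the setup of the biased inner-product estimator (u, v nonzero vectors, ε ∈ [0,1], p̃ within total variation ε of p_u, Γ = {i : |v(i)| ≥ (ṽ/(√(2ε)‖u‖))|u(i)|} with ṽ ≥ ‖v‖, and X defined by sampling i ~ p̃ and outputting 0 if i ∈ Γ and v(i)*‖u‖²/u(i)* otherwise), the variance of X satisfies Var[X] ≤ E[|X|²] ≤ 2‖u‖²ṽ². -/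
/-!
Off the outlier set `Γ` the estimator's value `T i = ‖v i‖ ν² / ‖u i‖` satisfies
`2ε T i² ≤ ν² ṽ²`. Writing `p̃ ≤ p_u + |p̃ - p_u|`, the `p_u` part of `E[|X|²]` is
`∑ ν² ‖v i‖² ≤ ν² ṽ²`, and since the deviations `|p̃ - p_u|` sum to at most `2ε`, the
deviation part is at most `ν² ṽ²` as well.
-/

open Finset

theorem Finset.sum_mul_le_of_sum_le_of_mul_le {ι : Type*} {s : Finset ι} {w x : ι → ℝ}
    {δ M : ℝ} (hw : ∀ i ∈ s, 0 ≤ w i) (hws : ∑ i ∈ s, w i ≤ δ)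
    (hx : ∀ i ∈ s, δ * x i ≤ M) (hM : 0 ≤ M) :
    ∑ i ∈ s, w i * x i ≤ M := by
  rcases le_or_gt δ 0 with hδ | hδ
  · have hw0 : ∀ i ∈ s, w i = 0 :=
      (sum_eq_zero_iff_of_nonneg hw).mp (le_antisymm (hws.trans hδ) (sum_nonneg hw))
    rwa [sum_eq_zero fun i hi => by rw [hw0 i hi, zero_mul]]
  · calc ∑ i ∈ s, w i * x i ≤ ∑ i ∈ s, w i * (M / δ) :=
          sum_le_sum fun i hi =>
            mul_le_mul_of_nonneg_left ((le_div_iff₀' hδ).mpr (hx i hi)) (hw i hi)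
      _ = (∑ i ∈ s, w i) * (M / δ) := (sum_mul _ _ _).symm
      _ ≤ δ * (M / δ) := mul_le_mul_of_nonneg_right hws (div_nonneg hM hδ.le)
      _ = M := mul_div_cancel₀ _ hδ.ne'

theorem norm_conj_mul_sq_div_conj (a b : ℂ) (c : ℝ) :
    ‖(starRingEnd ℂ) b * (c : ℂ) ^ 2 / (starRingEnd ℂ) a‖ = ‖b‖ * c ^ 2 / ‖a‖ := by
  rw [norm_div, norm_mul, norm_pow, Complex.norm_real, Real.norm_eq_abs, sq_abs,
    RCLike.norm_conj, RCLike.norm_conj]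

-- Also true when `a = 0` or `c = 0`, where the left side is `0` by the junk value of `/ 0`.
theorem sq_div_sq_mul_sq_le (a b c : ℝ) : a ^ 2 / c ^ 2 * (b * c ^ 2 / a) ^ 2 ≤ c ^ 2 * b ^ 2 := by
  rcases eq_or_ne a 0 with rfl | ha
  · simp only [div_zero, ne_eq, OfNat.ofNat_ne_zero, not_false_eq_true, zero_pow, mul_zero]
    positivity
  rcases eq_or_ne c 0 with rfl | hc
  · simp
  · exact (by field_simp : a ^ 2 / c ^ 2 * (b * c ^ 2 / a) ^ 2 = c ^ 2 * b ^ 2).le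

theorem mul_sq_le_add_abs_sub (p a b c : ℝ) :
    p * (b * c ^ 2 / a) ^ 2 ≤ c ^ 2 * b ^ 2 + |p - a ^ 2 / c ^ 2| * (b * c ^ 2 / a) ^ 2 := by
  have hp : p ≤ a ^ 2 / c ^ 2 + |p - a ^ 2 / c ^ 2| := sub_le_iff_le_add'.mp (le_abs_self _)
  calc p * (b * c ^ 2 / a) ^ 2
      ≤ (a ^ 2 / c ^ 2 + |p - a ^ 2 / c ^ 2|) * (b * c ^ 2 / a) ^ 2 :=
        mul_le_mul_of_nonneg_right hp (sq_nonneg _)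
    _ ≤ c ^ 2 * b ^ 2 + |p - a ^ 2 / c ^ 2| * (b * c ^ 2 / a) ^ 2 := by
        rw [add_mul]; exact add_le_add_left (sq_div_sq_mul_sq_le a b c) _

theorem two_mul_mul_sq_le_of_not_le {ε ν vt a b : ℝ} (hε : 0 ≤ ε) (hν : 0 ≤ ν) (hb : 0 ≤ b)
    (h : ¬ vt * a ≤ Real.sqrt (2 * ε) * ν * b) :
    2 * ε * (b * ν ^ 2 / a) ^ 2 ≤ ν ^ 2 * vt ^ 2 := by
  rw [not_le] at h
  have hpos : 0 ≤ Real.sqrt (2 * ε) * ν * b := by positivity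
  have ha : a ≠ 0 := by rintro rfl; rw [mul_zero] at h; linarith
  have hsq : 2 * ε * (ν * b) ^ 2 ≤ (vt * a) ^ 2 := by
    have := pow_le_pow_left₀ hpos h.le 2
    rwa [mul_assoc, mul_pow, Real.sq_sqrt (by linarith)] at this
  calc 2 * ε * (b * ν ^ 2 / a) ^ 2 = 2 * ε * (ν * b) ^ 2 * (ν / a) ^ 2 := by ring
    _ ≤ (vt * a) ^ 2 * (ν / a) ^ 2 := mul_le_mul_of_nonneg_right hsq (sq_nonneg _)
    _ = ν ^ 2 * vt ^ 2 := by field_simp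

theorem robust_inner_product_variance_general
    (n : ℕ) (u v : Fin n → ℂ)
    (ε : ℝ)
    (ptilde : Fin n → ℝ)
    (nu : ℝ) (hnu : nu = Real.sqrt (∑ i, ‖u i‖ ^ 2))
    (hTV : (1/2) * ∑ i, |ptilde i - ‖u i‖ ^ 2 / nu ^ 2| ≤ ε)
    (vtilde : ℝ) (hvtilde : Real.sqrt (∑ i, ‖v i‖ ^ 2) ≤ vtilde)
    (EX : ℂ)
    (EX2 : ℝ)
    (hEX2 : EX2 = ∑ i, if vtilde * ‖u i‖ ≤ Real.sqrt (2 * ε) * nu * ‖v i‖ then (0:ℝ)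
        else ptilde i * ‖(starRingEnd ℂ) (v i) * (nu:ℂ) ^ 2 / (starRingEnd ℂ) (u i)‖ ^ 2) :
    EX2 - ‖EX‖ ^ 2 ≤ EX2 ∧ EX2 ≤ 2 * nu ^ 2 * vtilde ^ 2 := by
  refine ⟨sub_le_self _ (sq_nonneg _), ?_⟩
  have hν : 0 ≤ nu := hnu ▸ Real.sqrt_nonneg _
  have hdev : ∑ i, |ptilde i - ‖u i‖ ^ 2 / nu ^ 2| ≤ 2 * ε := by linarith
  have hε : 0 ≤ ε := by
    linarith [sum_nonneg fun i (_ : i ∈ univ) => abs_nonneg (ptilde i - ‖u i‖ ^ 2 / nu ^ 2)]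
  have hv : ∑ i, ‖v i‖ ^ 2 ≤ vtilde ^ 2 := (Real.sqrt_le_iff.mp hvtilde).2
  simp only [norm_conj_mul_sq_div_conj] at hEX2
  set Γ := fun i => vtilde * ‖u i‖ ≤ Real.sqrt (2 * ε) * nu * ‖v i‖
  set T := fun i => ‖v i‖ * nu ^ 2 / ‖u i‖
  calc EX2 ≤ ∑ i, (nu ^ 2 * ‖v i‖ ^ 2
        + |ptilde i - ‖u i‖ ^ 2 / nu ^ 2| * if Γ i then 0 else T i ^ 2) := by
        rw [hEX2]
        refine sum_le_sum fun i _ => ?_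
        split_ifs
        · positivity
        · exact mul_sq_le_add_abs_sub _ _ _ _
    _ = nu ^ 2 * ∑ i, ‖v i‖ ^ 2
        + ∑ i, |ptilde i - ‖u i‖ ^ 2 / nu ^ 2| * if Γ i then 0 else T i ^ 2 := by
        rw [sum_add_distrib, mul_sum]
    _ ≤ nu ^ 2 * vtilde ^ 2 + nu ^ 2 * vtilde ^ 2 := by
        gcongr
        refine sum_mul_le_of_sum_le_of_mul_le (fun i _ => abs_nonneg _) hdev
          (fun i _ => ?_) (by positivity)
        split_ifs with hΓ
        · rw [mul_zero]; positivity
        · exact two_mul_mul_sq_le_of_not_le hε hν (norm_nonneg _) hΓ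
    _ = 2 * nu ^ 2 * vtilde ^ 2 := by ring

/-- **Robust inner product estimator, variance bound.**
With the setup of the biased inner-product estimator (`u`, `v` nonzero, `ε ∈ [0,1]`,
`p̃` within total variation `ε` of `p_u`, `Γ = {i : |v i| ≥ (ṽ/(√(2ε)‖u‖))|u i|}` with
`ṽ ≥ ‖v‖`, and `X` sampling `i ~ p̃`, outputting `0` on `Γ` and `v(i)*‖u‖²/u(i)*` otherwise),
one has `Var[X] ≤ E[|X|²] ≤ 2‖u‖²ṽ²`. -/
theorem robust_inner_product_variance
    (n : ℕ) (u v : Fin n → ℂ) (hu : u ≠ 0) (hv : v ≠ 0)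
    (ε : ℝ) (hε : ε ∈ Set.Icc (0:ℝ) 1)
    (ptilde : Fin n → ℝ)
    (hpt_nonneg : ∀ i, 0 ≤ ptilde i) (hpt_sum : ∑ i, ptilde i = 1)
    (nu : ℝ) (hnu : nu = Real.sqrt (∑ i, ‖u i‖ ^ 2))
    (hTV : (1/2) * ∑ i, |ptilde i - ‖u i‖ ^ 2 / nu ^ 2| ≤ ε)
    (vtilde : ℝ) (hvtilde : Real.sqrt (∑ i, ‖v i‖ ^ 2) ≤ vtilde)
    (EX : ℂ)
    (hEX : EX = ∑ i, if vtilde * ‖u i‖ ≤ Real.sqrt (2 * ε) * nu * ‖v i‖ then (0:ℂ)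
        else (ptilde i : ℂ) * ((starRingEnd ℂ) (v i) * (nu:ℂ) ^ 2 / (starRingEnd ℂ) (u i)))
    (EX2 : ℝ)
    (hEX2 : EX2 = ∑ i, if vtilde * ‖u i‖ ≤ Real.sqrt (2 * ε) * nu * ‖v i‖ then (0:ℝ)
        else ptilde i * ‖(starRingEnd ℂ) (v i) * (nu:ℂ) ^ 2 / (starRingEnd ℂ) (u i)‖ ^ 2) :
    EX2 - ‖EX‖ ^ 2 ≤ EX2 ∧ EX2 ≤ 2 * nu ^ 2 * vtilde ^ 2 :=
  robust_inner_product_variance_general n u v ε ptilde nu hnu hTV vtilde hvtilde EX EX2 hEX2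
end

section
/- Let A ∈ ℂ^{m×n} be nonzero, r ≤ m a positive integer, ε ∈ [0,1], φ ≥ 1, and let S ∈ ℝ^{r×m} be an (r, ε, φ)-approximate importance matrix sketch of A (rows sampled i.i.d. from a distribution p̃ with ‖p̃ − p‖_TV ≤ ε, where p(i) ≥ (1/φ)·‖A(i,·)‖²/‖A‖_F², and row i of S equals e_{s_i}/√(r·p(s_i)) when p(s_i) > 0, else zero). Then for every i ∈ {1,…,r}, ‖[SA](i,·)‖² ≤ φ‖A‖_F²/r (deterministically), and |E[‖SA‖_F²] − ‖A‖_F²| ≤ 2εφ‖A‖_F². -/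
set_option maxHeartbeats 1000000

open Finset

/-- Squared Euclidean norm of row `i` of a matrix. -/
noncomputable def rowNormSq {m n : ℕ} (A : Matrix (Fin m) (Fin n) ℂ) (i : Fin m) : ℝ :=
  ∑ j, ‖A i j‖ ^ 2

/-- Squared Frobenius norm of a matrix. -/
noncomputable def frobSq {m n : ℕ} (A : Matrix (Fin m) (Fin n) ℂ) : ℝ :=
  ∑ i, ∑ j, ‖A i j‖ ^ 2

/-- The sketch matrix `S ∈ ℝ^{r×m}` (viewed over `ℂ`) determined by the sampled indices
`s : Fin r → Fin m` and the importance distribution `p`: row `i` equals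
`e_{s i} / √(r·p(s i))` when `p (s i) > 0` and is zero otherwise. -/
noncomputable def sketchMatrix {m : ℕ} (r : ℕ) (p : Fin m → ℝ) (s : Fin r → Fin m) :
    Matrix (Fin r) (Fin m) ℂ :=
  Matrix.of fun i j =>
    if j = s i ∧ 0 < p (s i) then ((1 / Real.sqrt (r * p (s i)) : ℝ) : ℂ) else 0

/-- **Approximate importance matrix sketch: row-norm bound and expectation of `‖SA‖_F²`.**
Let `A ∈ ℂ^{m×n}` be nonzero, `1 ≤ r ≤ m`, `ε ∈ [0,1]`, `φ ≥ 1`, and let `S` be the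
`(r,ε,φ)`-approximate importance sketch built from i.i.d. samples `s₁,…,s_r ~ p̃`, where
`‖p̃−p‖_TV ≤ ε` and `p(i) ≥ (1/φ)·‖A(i,·)‖²/‖A‖_F²`.  Then deterministically every row of
`SA` satisfies `‖[SA](i,·)‖² ≤ φ‖A‖_F²/r`, and `|E[‖SA‖_F²] − ‖A‖_F²| ≤ 2εφ‖A‖_F²`
(the expectation being over the `r` i.i.d. samples from `p̃`). -/
theorem approx_importance_sketch_rowbound_and_expectation
    (m n r : ℕ) (hr : 1 ≤ r) (hrm : r ≤ m)
    (A : Matrix (Fin m) (Fin n) ℂ) (hA : A ≠ 0)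
    (ε : ℝ) (hε : ε ∈ Set.Icc (0:ℝ) 1) (φ : ℝ) (hφ : 1 ≤ φ)
    (p ptilde : Fin m → ℝ)
    (hp_nonneg : ∀ i, 0 ≤ p i) (hp_sum : ∑ i, p i = 1)
    (hpt_nonneg : ∀ i, 0 ≤ ptilde i) (hpt_sum : ∑ i, ptilde i = 1)
    (hp_over : ∀ i, (1 / φ) * (rowNormSq A i / frobSq A) ≤ p i)
    (hTV : (1/2) * ∑ i, |ptilde i - p i| ≤ ε) :
    (∀ (s : Fin r → Fin m) (i : Fin r),
        rowNormSq (sketchMatrix r p s * A) i ≤ φ * frobSq A / r) ∧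
    |(∑ s : Fin r → Fin m, (∏ i, ptilde (s i)) * frobSq (sketchMatrix r p s * A))
        - frobSq A| ≤ 2 * ε * φ * frobSq A := by
  obtain ⟨hε0, hε1⟩ := hε
  have hφ0 : (0:ℝ) < φ := lt_of_lt_of_le one_pos hφ
  have hrpos : (0:ℝ) < r := by exact_mod_cast hr
  have hrne : (r:ℝ) ≠ 0 := hrpos.ne'
  have hrownn : ∀ k, 0 ≤ rowNormSq A k :=
    fun k => Finset.sum_nonneg fun j _ => by positivity
  have hFrow : frobSq A = ∑ i, rowNormSq A i := rfl
  have hFnn : 0 ≤ frobSq A :=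
    Finset.sum_nonneg fun i _ => Finset.sum_nonneg fun j _ => by positivity
  have hF0 : 0 < frobSq A := by
    have hex : ∃ i j, A i j ≠ 0 := by
      by_contra h
      push_neg at h
      exact hA (by ext i j; simp [h i j])
    obtain ⟨i, j, hij⟩ := hex
    have h1 : 0 < ‖A i j‖ ^ 2 := pow_pos (norm_pos_iff.mpr hij) 2
    have h2 : ‖A i j‖ ^ 2 ≤ rowNormSq A i :=
      Finset.single_le_sum (f := fun j => ‖A i j‖ ^ 2) (fun j _ => by positivity)
        (Finset.mem_univ j)
    have h3 : rowNormSq A i ≤ frobSq A := by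
      rw [hFrow]
      exact Finset.single_le_sum (fun i _ => hrownn i) (Finset.mem_univ i)
    linarith
  have hrowle : ∀ k, rowNormSq A k ≤ φ * p k * frobSq A := by
    intro k
    have h := hp_over k
    have h2 := mul_le_mul_of_nonneg_left h (mul_pos hφ0 hF0).le
    calc rowNormSq A k = (φ * frobSq A) * ((1/φ) * (rowNormSq A k / frobSq A)) := by
          field_simp
      _ ≤ (φ * frobSq A) * p k := h2
      _ = φ * p k * frobSq A := by ring
  -- explicit formula for row norms of the sketched matrix
  have hrow : ∀ (s : Fin r → Fin m) (i : Fin r),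
      rowNormSq (sketchMatrix r p s * A) i
        = if 0 < p (s i) then rowNormSq A (s i) / ((r:ℝ) * p (s i)) else 0 := by
    intro s i
    by_cases h : 0 < p (s i)
    · have hrp : 0 < (r:ℝ) * p (s i) := mul_pos hrpos h
      have hentry : ∀ j, (sketchMatrix r p s * A) i j
          = ((1 / Real.sqrt ((r:ℝ) * p (s i)) : ℝ) : ℂ) * A (s i) j := by
        intro j
        simp [Matrix.mul_apply, sketchMatrix, h, ite_and]
      unfold rowNormSq
      rw [if_pos h]
      have hterm : ∀ j, ‖(sketchMatrix r p s * A) i j‖ ^ 2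
          = ‖A (s i) j‖ ^ 2 / ((r:ℝ) * p (s i)) := by
        intro j
        rw [hentry j, norm_mul, mul_pow, Complex.norm_real, Real.norm_eq_abs,
          abs_of_nonneg (by positivity), div_pow, one_pow, Real.sq_sqrt hrp.le]
        ring
      rw [Finset.sum_congr rfl fun j _ => hterm j, ← Finset.sum_div]
    · unfold rowNormSq
      rw [if_neg h]
      have hentry : ∀ j, (sketchMatrix r p s * A) i j = 0 := by
        intro j
        simp [Matrix.mul_apply, sketchMatrix, h]
      simp [hentry]
  constructor
  · -- row-norm bound
    intro s i
    rw [hrow s i]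
    by_cases h : 0 < p (s i)
    · rw [if_pos h, div_le_div_iff₀ (mul_pos hrpos h) hrpos]
      nlinarith [mul_le_mul_of_nonneg_right (hrowle (s i)) hrpos.le]
    · rw [if_neg h]
      positivity
  · -- expectation bound
    set g : Fin m → ℝ := fun k => if 0 < p k then rowNormSq A k / p k else 0 with hgdef
    have hgnn : ∀ k, 0 ≤ g k := by
      intro k
      by_cases h : 0 < p k
      · simp only [hgdef, if_pos h]
        exact div_nonneg (hrownn k) (hp_nonneg k)
      · simp [hgdef, h]
    have hgle : ∀ k, g k ≤ φ * frobSq A := by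
      intro k
      by_cases h : 0 < p k
      · simp only [hgdef, if_pos h]
        rw [div_le_iff₀ h]
        nlinarith [hrowle k]
      · simp only [hgdef, if_neg h]
        positivity
    have hp0row : ∀ k, ¬ 0 < p k → rowNormSq A k = 0 := by
      intro k h
      have hpk : p k = 0 := le_antisymm (not_lt.1 h) (hp_nonneg k)
      have h1 := hrowle k
      rw [hpk] at h1
      nlinarith [hrownn k]
    have hpg : ∑ k, p k * g k = frobSq A := by
      rw [hFrow]
      refine Finset.sum_congr rfl fun k _ => ?_
      by_cases h : 0 < p k
      · have hne : p k ≠ 0 := h.ne'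
        simp only [hgdef, if_pos h]
        field_simp
      · simp [hgdef, h, hp0row k h]
    have hfrobSA : ∀ s : Fin r → Fin m,
        frobSq (sketchMatrix r p s * A) = ∑ i : Fin r, g (s i) / r := by
      intro s
      have h0 : frobSq (sketchMatrix r p s * A)
          = ∑ i, rowNormSq (sketchMatrix r p s * A) i := rfl
      rw [h0]
      refine Finset.sum_congr rfl fun i _ => ?_
      rw [hrow s i]
      by_cases h : 0 < p (s i)
      · simp only [hgdef, if_pos h]
        rw [div_div, mul_comm]
      · simp [hgdef, h]
    have key : ∀ (F : Fin r → Fin m → ℝ),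
        ∑ s : Fin r → Fin m, ∏ j, F j (s j) = ∏ j, ∑ k, F j k :=
      fun F => (Fintype.prod_sum F).symm
    have hmarg : ∀ i : Fin r,
        ∑ s : Fin r → Fin m, (∏ j, ptilde (s j)) * (g (s i) / r)
          = ∑ k, ptilde k * (g k / r) := by
      intro i
      set F : Fin r → Fin m → ℝ :=
        fun j k => if j = i then ptilde k * (g k / r) else ptilde k with hF
      have h1 : ∀ s : Fin r → Fin m,
          (∏ j, ptilde (s j)) * (g (s i) / r) = ∏ j, F j (s j) := by
        intro s
        simp only [hF]
        rw [Finset.prod_eq_mul_prod_sdiff_singleton_of_mem (Finset.mem_univ i),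
          Finset.prod_eq_mul_prod_sdiff_singleton_of_mem (Finset.mem_univ i)
            (fun j => if j = i then ptilde (s j) * (g (s j) / r) else ptilde (s j)),
          if_pos rfl]
        have h2 : (∏ j ∈ Finset.univ \ {i},
            (if j = i then ptilde (s j) * (g (s j) / r) else ptilde (s j)))
            = ∏ j ∈ Finset.univ \ {i}, ptilde (s j) :=
          Finset.prod_congr rfl fun j hj => if_neg (by simpa using hj)
        rw [h2]
        ring
      calc ∑ s : Fin r → Fin m, (∏ j, ptilde (s j)) * (g (s i) / r)
          = ∑ s : Fin r → Fin m, ∏ j, F j (s j) :=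
            Finset.sum_congr rfl fun s _ => h1 s
        _ = ∏ j, ∑ k, F j k := key F
        _ = ∑ k, ptilde k * (g k / r) := ?_
      rw [Finset.prod_eq_mul_prod_sdiff_singleton_of_mem (Finset.mem_univ i)]
      have h3 : (∏ j ∈ Finset.univ \ {i}, ∑ k, F j k) = 1 := by
        refine Finset.prod_eq_one fun j hj => ?_
        have hji : j ≠ i := by simpa using hj
        simp [hF, hji, hpt_sum]
      rw [h3]
      simp [hF, hpt_sum]
    have hE : (∑ s : Fin r → Fin m, (∏ i, ptilde (s i)) * frobSq (sketchMatrix r p s * A))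
        = ∑ k, ptilde k * g k := by
      calc ∑ s : Fin r → Fin m, (∏ i, ptilde (s i)) * frobSq (sketchMatrix r p s * A)
          = ∑ s : Fin r → Fin m, ∑ i : Fin r, (∏ j, ptilde (s j)) * (g (s i) / r) := by
            refine Finset.sum_congr rfl fun s _ => ?_
            rw [hfrobSA s, Finset.mul_sum]
        _ = ∑ i : Fin r, ∑ s : Fin r → Fin m, (∏ j, ptilde (s j)) * (g (s i) / r) :=
            Finset.sum_comm
        _ = ∑ _i : Fin r, ∑ k, ptilde k * (g k / r) :=
            Finset.sum_congr rfl fun i _ => hmarg i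
        _ = (r:ℝ) * ∑ k, ptilde k * (g k / r) := by
            rw [Finset.sum_const, Finset.card_univ, Fintype.card_fin, nsmul_eq_mul]
        _ = ∑ k, ptilde k * g k := by
            rw [Finset.mul_sum]
            refine Finset.sum_congr rfl fun k _ => ?_
            field_simp
    rw [hE]
    have hdiff : (∑ k, ptilde k * g k) - frobSq A
        = ∑ k, (ptilde k - p k) * g k := by
      rw [← hpg, ← Finset.sum_sub_distrib]
      exact Finset.sum_congr rfl fun k _ => by ring
    rw [hdiff]
    have hTV2 : ∑ i, |ptilde i - p i| ≤ 2 * ε := by linarith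
    calc |∑ k, (ptilde k - p k) * g k|
        ≤ ∑ k, |(ptilde k - p k) * g k| := Finset.abs_sum_le_sum_abs _ _
      _ = ∑ k, |ptilde k - p k| * g k := by
          refine Finset.sum_congr rfl fun k _ => ?_
          rw [abs_mul, abs_of_nonneg (hgnn k)]
      _ ≤ ∑ k, |ptilde k - p k| * (φ * frobSq A) :=
          Finset.sum_le_sum fun k _ =>
            mul_le_mul_of_nonneg_left (hgle k) (abs_nonneg _)
      _ = (∑ k, |ptilde k - p k|) * (φ * frobSq A) := by
          rw [Finset.sum_mul]
      _ ≤ (2 * ε) * (φ * frobSq A) :=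
          mul_le_mul_of_nonneg_right hTV2 (by positivity)
      _ = 2 * ε * φ * frobSq A := by ring
end

section
/- Let A ∈ ℂ^{m×n} be nonzero, and S be an (r, ε, φ)-approximate importance matrix sketch of A. Then for any δ ∈ (0,1], with probability at least 1 − δ, |‖SA‖_F² − ‖A‖_F²| ≤ (2ε + √(ln(2/δ)/(2r)))·φ·‖A‖_F². -/
open Finset

/-! Put `w k = ‖A(k,·)‖² / (r p k)`. Then `‖SA‖_F² = ∑ᵢ w (sᵢ)` is a sum of `r` i.i.d. samples of
`w` under `p̃`, and the importance condition `‖A(k,·)‖² ≤ φ ‖A‖_F² p k` puts `w` in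
`[0, φ ‖A‖_F² / r]`. Under `p` the sum would have mean exactly `‖A‖_F²`; sampling from `p̃` moves
the mean by at most `‖p̃ - p‖₁ φ ‖A‖_F² ≤ 2εφ ‖A‖_F²`. Hoeffding's inequality bounds the
probability of a further deviation `t = √(ln(2/δ)/(2r)) φ ‖A‖_F²` by
`2 exp (-2t² / (r (φ ‖A‖_F² / r)²)) = δ`. -/

open MeasureTheory ProbabilityTheory Real

section DiscreteMeasure

variable {α : Type*} [Fintype α] [MeasurableSpace α]

noncomputable def discreteMeasure (q : α → ℝ) : Measure α :=
  ∑ a, ENNReal.ofReal (q a) • Measure.dirac a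

instance (q : α → ℝ) : IsFiniteMeasure (discreteMeasure q) := by
  constructor
  simp [discreteMeasure, ENNReal.sum_lt_top]

lemma isProbabilityMeasure_discreteMeasure {q : α → ℝ} (hq : ∀ a, 0 ≤ q a)
    (hq1 : ∑ a, q a = 1) : IsProbabilityMeasure (discreteMeasure q) := by
  constructor
  simp [discreteMeasure, ← ENNReal.ofReal_sum_of_nonneg fun a _ => hq a, hq1]

variable [MeasurableSingletonClass α]

lemma discreteMeasure_singleton (q : α → ℝ) (a : α) :
    discreteMeasure q {a} = ENNReal.ofReal (q a) := by
  classical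
  simp [discreteMeasure, Set.indicator]

lemma integral_discreteMeasure {q : α → ℝ} (hq : ∀ a, 0 ≤ q a) (f : α → ℝ) :
    ∫ a, f a ∂discreteMeasure q = ∑ a, q a * f a := by
  rw [discreteMeasure, integral_finsetSum_measure]
  · simp [integral_smul_measure, hq]
  · exact fun a _ => (integrable_dirac enorm_lt_top).smul_measure ENNReal.ofReal_ne_top

lemma measureReal_pi_discreteMeasure {ι : Type*} [Fintype ι] [DecidableEq ι] {q : α → ℝ}
    (hq : ∀ a, 0 ≤ q a) (P : (ι → α) → Prop) [DecidablePred P] :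
    (Measure.pi fun _ : ι => discreteMeasure q).real {ω | P ω}
      = ∑ ω, if P ω then ∏ i, q (ω i) else 0 := by
  rw [← Finset.sum_filter, ← Finset.coe_filter_univ, ← sum_measureReal_singleton]
  refine Finset.sum_congr rfl fun ω _ => ?_
  simp [measureReal_def, Measure.pi_singleton, discreteMeasure_singleton, ENNReal.toReal_prod, hq]

end DiscreteMeasure

section Hoeffding

variable {ι α : Type*} [Fintype ι] [MeasurableSpace α] {ν : Measure α} [IsProbabilityMeasure ν]
  {g : α → ℝ} {a b : ℝ}

lemma measureReal_pi_sum_sub_integral_ge_le (hg : Measurable g) (hgab : ∀ x, g x ∈ Set.Icc a b)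
    {t : ℝ} (ht : 0 ≤ t) :
    (Measure.pi fun _ : ι => ν).real {ω | t ≤ ∑ i, (g (ω i) - ∫ x, g x ∂ν)}
      ≤ exp (-2 * t ^ 2 / (Fintype.card ι * (b - a) ^ 2)) := by
  have hsubG : ∀ i, HasSubgaussianMGF (fun ω : ι → α => g (ω i) - ∫ x, g x ∂ν)
      ((‖b - a‖₊ / 2) ^ 2) (Measure.pi fun _ : ι => ν) := by
    intro i
    have h := hasSubgaussianMGF_of_mem_Icc (μ := Measure.pi fun _ : ι => ν)
      (X := fun ω => g (ω i)) (hg.comp (measurable_pi_apply i)).aemeasurable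
      (ae_of_all _ fun ω => hgab (ω i))
    rwa [integral_comp_eval hg.aestronglyMeasurable] at h
  have hindep : iIndepFun (fun i (ω : ι → α) => g (ω i) - ∫ x, g x ∂ν)
      (Measure.pi fun _ : ι => ν) :=
    iIndepFun_pi (X := fun _ x => g x - ∫ x, g x ∂ν) fun _ => (hg.sub_const _).aemeasurable
  refine (HasSubgaussianMGF.measure_sum_ge_le_of_iIndepFun hindep (fun i _ => hsubG i)
    ht).trans_eq ?_
  congr 1
  simp only [Finset.sum_const, Finset.card_univ, nsmul_eq_mul]
  push_cast
  rw [Real.norm_eq_abs, div_pow, sq_abs]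
  field_simp

lemma measureReal_pi_abs_sum_sub_integral_ge_le (hg : Measurable g)
    (hgab : ∀ x, g x ∈ Set.Icc a b) {t : ℝ} (ht : 0 ≤ t) :
    (Measure.pi fun _ : ι => ν).real {ω | t ≤ |∑ i, (g (ω i) - ∫ x, g x ∂ν)|}
      ≤ 2 * exp (-2 * t ^ 2 / (Fintype.card ι * (b - a) ^ 2)) := by
  have hupper := measureReal_pi_sum_sub_integral_ge_le (ι := ι) (ν := ν) hg hgab ht
  have hlower := measureReal_pi_sum_sub_integral_ge_le (ι := ι) (ν := ν) (g := fun x => -g x)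
    hg.neg (fun x => ⟨neg_le_neg (hgab x).2, neg_le_neg (hgab x).1⟩) ht
  rw [show -a - -b = b - a by ring] at hlower
  have hsum_neg : ∀ ω : ι → α,
      ∑ i, (-g (ω i) - ∫ x, -g x ∂ν) = -∑ i, (g (ω i) - ∫ x, g x ∂ν) := fun ω => by
    simp only [integral_neg, ← Finset.sum_neg_distrib, neg_sub_neg, neg_sub]
  calc _ ≤ (Measure.pi fun _ : ι => ν).real
        ({ω | t ≤ ∑ i, (g (ω i) - ∫ x, g x ∂ν)} ∪ {ω | t ≤ ∑ i, (-g (ω i) - ∫ x, -g x ∂ν)}) := by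
        refine measureReal_mono fun ω (hω : t ≤ |_|) => ?_
        simpa only [Set.mem_union, Set.mem_ofPred_eq, hsum_neg] using le_abs.mp hω
    _ ≤ _ := measureReal_union_le _ _
    _ ≤ _ := by linarith

lemma one_sub_le_measureReal_pi_abs_sum_sub_le (hg : Measurable g)
    (hgab : ∀ x, g x ∈ Set.Icc a b) {F t β : ℝ} (ht : 0 ≤ t)
    (hF : |Fintype.card ι * ∫ x, g x ∂ν - F| ≤ β - t) :
    1 - 2 * exp (-2 * t ^ 2 / (Fintype.card ι * (b - a) ^ 2))
      ≤ (Measure.pi fun _ : ι => ν).real {ω | |∑ i, g (ω i) - F| ≤ β} := by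
  have hcover : Set.univ ⊆ {ω : ι → α | |∑ i, g (ω i) - F| ≤ β}
      ∪ {ω | t ≤ |∑ i, (g (ω i) - ∫ x, g x ∂ν)|} := by
    intro ω _
    by_contra! hω
    simp only [Set.mem_union, Set.mem_ofPred_eq, not_or, not_le] at hω
    have hcenter : ∑ i, (g (ω i) - ∫ x, g x ∂ν)
        = ∑ i, g (ω i) - Fintype.card ι * ∫ x, g x ∂ν := by
      simp [Finset.sum_sub_distrib]
    have := abs_sub_le (∑ i, g (ω i)) (Fintype.card ι * ∫ x, g x ∂ν) F
    rw [← hcenter] at this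
    linarith
  have := (measureReal_mono (μ := Measure.pi fun _ : ι => ν) hcover).trans
    (measureReal_union_le _ _)
  rw [probReal_univ] at this
  linarith [measureReal_pi_abs_sum_sub_integral_ge_le (ι := ι) (ν := ν) hg hgab ht]

end Hoeffding

lemma abs_sum_mul_sub_sum_mul_le {ι : Type*} [Fintype ι] (p q w : ι → ℝ) {c : ℝ}
    (hw : ∀ k, w k ∈ Set.Icc 0 c) :
    |∑ k, q k * w k - ∑ k, p k * w k| ≤ (∑ k, |q k - p k|) * c := by
  rw [← Finset.sum_sub_distrib, Finset.sum_mul]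
  calc |∑ k, (q k * w k - p k * w k)| ≤ ∑ k, |q k * w k - p k * w k| :=
        Finset.abs_sum_le_sum_abs _ _
    _ = ∑ k, |q k - p k| * w k := by
        simp only [← sub_mul, abs_mul, abs_of_nonneg (hw _).1]
    _ ≤ ∑ k, |q k - p k| * c := by gcongr with k; exact (hw k).2

section Sketch

variable {m n : ℕ} (A : Matrix (Fin m) (Fin n) ℂ)

lemma rowNormSq_nonneg (k : Fin m) : 0 ≤ rowNormSq A k :=
  Finset.sum_nonneg fun _ _ => sq_nonneg _

lemma frobSq_pos {A : Matrix (Fin m) (Fin n) ℂ} (hA : A ≠ 0) : 0 < frobSq A := by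
  obtain ⟨i, j, hij⟩ : ∃ i j, A i j ≠ 0 := by
    by_contra! h
    exact hA (Matrix.ext h)
  refine Finset.sum_pos' (fun k _ => rowNormSq_nonneg A k) ⟨i, Finset.mem_univ i, ?_⟩
  exact Finset.sum_pos' (fun _ _ => sq_nonneg _) ⟨j, Finset.mem_univ j, by positivity⟩

noncomputable def sketchRowWeight (r : ℕ) (p : Fin m → ℝ) (k : Fin m) : ℝ :=
  if 0 < p k then rowNormSq A k / (r * p k) else 0

lemma frobSq_sketchMatrix_mul {r : ℕ} (p : Fin m → ℝ) (s : Fin r → Fin m) :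
    frobSq (sketchMatrix r p s * A) = ∑ i, sketchRowWeight A r p (s i) := by
  refine Finset.sum_congr rfl fun i _ => ?_
  have hrow : ∀ j, (sketchMatrix r p s * A) i j
      = if 0 < p (s i) then ((1 / √(r * p (s i)) : ℝ) : ℂ) * A (s i) j else 0 := by
    intro j
    rw [Matrix.mul_apply, Finset.sum_eq_single (s i)]
    · by_cases hps : 0 < p (s i) <;> simp [sketchMatrix, hps]
    · intro k _ hk
      simp [sketchMatrix, hk]
    · simp
  by_cases hps : 0 < p (s i)
  · have hrp : 0 ≤ (r : ℝ) * p (s i) := by positivity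
    simp only [hrow, hps, if_true, sketchRowWeight, rowNormSq, norm_mul, mul_pow,
      Complex.norm_real, Real.norm_eq_abs, sq_abs, div_pow, one_pow, sq_sqrt hrp,
      ← Finset.mul_sum]
    ring
  · simp [hrow, hps, sketchRowWeight]

variable {A} {φ : ℝ} {p : Fin m → ℝ}

lemma rowNormSq_le_of_importance (hφ : 0 < φ) (hA : A ≠ 0)
    (hp : ∀ i, (1 / φ) * (rowNormSq A i / frobSq A) ≤ p i) (k : Fin m) :
    rowNormSq A k ≤ φ * frobSq A * p k := by
  have := hp k
  rw [one_div_mul_eq_div, div_div, div_le_iff₀ (mul_pos (frobSq_pos hA) hφ)] at this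
  linarith

lemma sketchRowWeight_mem_Icc (hφ : 0 < φ) (hA : A ≠ 0)
    (hp : ∀ i, (1 / φ) * (rowNormSq A i / frobSq A) ≤ p i) (r : ℕ) (k : Fin m) :
    sketchRowWeight A r p k ∈ Set.Icc 0 (φ * frobSq A / r) := by
  unfold sketchRowWeight
  split_ifs with hpk
  · refine ⟨by positivity [rowNormSq_nonneg A k], ?_⟩
    calc rowNormSq A k / (r * p k) ≤ φ * frobSq A * p k / (r * p k) := by
          gcongr
          exact rowNormSq_le_of_importance hφ hA hp k
      _ = φ * frobSq A / r := mul_div_mul_right _ _ hpk.ne'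
  · exact ⟨le_rfl, by positivity [frobSq_pos hA]⟩

lemma sum_mul_sketchRowWeight (hφ : 0 < φ) (hA : A ≠ 0)
    (hp : ∀ i, (1 / φ) * (rowNormSq A i / frobSq A) ≤ p i) (r : ℕ) :
    ∑ k, p k * sketchRowWeight A r p k = frobSq A / r := by
  rw [frobSq, Finset.sum_div]
  refine Finset.sum_congr rfl fun k _ => ?_
  unfold sketchRowWeight
  split_ifs with hpk
  · rw [mul_comm (r : ℝ), ← mul_div_assoc, mul_div_mul_left _ _ hpk.ne']
    rfl
  · have hrow : rowNormSq A k ≤ 0 :=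
      (rowNormSq_le_of_importance hφ hA hp k).trans
        (mul_nonpos_of_nonneg_of_nonpos (by positivity [frobSq_pos hA]) (not_lt.mp hpk))
    rw [mul_zero, ← rowNormSq, le_antisymm hrow (rowNormSq_nonneg A k), zero_div]

lemma abs_mul_sum_mul_sketchRowWeight_sub_le (hφ : 0 < φ) (hA : A ≠ 0)
    (hp : ∀ i, (1 / φ) * (rowNormSq A i / frobSq A) ≤ p i) {r : ℕ} (hr : 0 < r)
    (q : Fin m → ℝ) :
    |r * ∑ k, q k * sketchRowWeight A r p k - frobSq A|
      ≤ (∑ k, |q k - p k|) * (φ * frobSq A) := by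
  have hr0 : (0 : ℝ) < r := by exact_mod_cast hr
  have hmean := abs_sum_mul_sub_sum_mul_le p q _ (sketchRowWeight_mem_Icc hφ hA hp r)
  rw [sum_mul_sketchRowWeight hφ hA hp r] at hmean
  calc |r * ∑ k, q k * sketchRowWeight A r p k - frobSq A|
        = |r * (∑ k, q k * sketchRowWeight A r p k - frobSq A / r)| := by
        rw [mul_sub, mul_div_cancel₀ _ hr0.ne']
    _ = r * |∑ k, q k * sketchRowWeight A r p k - frobSq A / r| := by
        rw [abs_mul, abs_of_pos hr0]
    _ ≤ r * ((∑ k, |q k - p k|) * (φ * frobSq A / r)) := by gcongr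
    _ = (∑ k, |q k - p k|) * (φ * frobSq A) := by field_simp

end Sketch

lemma two_mul_exp_hoeffding_exponent_at_sqrt_log {r : ℕ} (hr : 0 < r) {C δ : ℝ} (hC : C ≠ 0)
    (hδ0 : 0 < δ) (hδ2 : δ ≤ 2) :
    2 * exp (-2 * (√(log (2 / δ) / (2 * r)) * C) ^ 2 / (r * (C / r) ^ 2)) = δ := by
  have hr0 : (0 : ℝ) < r := by exact_mod_cast hr
  have hlog : 0 ≤ log (2 / δ) := log_nonneg (by rw [le_div_iff₀ hδ0]; linarith)
  have hexponent : -2 * (√(log (2 / δ) / (2 * r)) * C) ^ 2 / (r * (C / r) ^ 2) = -log (2 / δ) := by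
    rw [mul_pow, sq_sqrt (by positivity)]
    field_simp
  rw [hexponent, exp_neg, exp_log (by positivity)]
  field_simp

theorem approx_importance_sketch_frobenius_concentration_general
    (m n r : ℕ) (hr : 1 ≤ r)
    (A : Matrix (Fin m) (Fin n) ℂ) (hA : A ≠ 0)
    (ε : ℝ) (φ : ℝ) (hφ : 1 ≤ φ)
    (δ : ℝ) (hδ : δ ∈ Set.Ioc (0:ℝ) 1)
    (p ptilde : Fin m → ℝ)
    (hpt_nonneg : ∀ i, 0 ≤ ptilde i) (hpt_sum : ∑ i, ptilde i = 1)
    (hp_over : ∀ i, (1 / φ) * (rowNormSq A i / frobSq A) ≤ p i)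
    (hTV : (1/2) * ∑ i, |ptilde i - p i| ≤ ε) :
    1 - δ ≤ ∑ s : Fin r → Fin m,
      if |frobSq (sketchMatrix r p s * A) - frobSq A|
          ≤ (2 * ε + Real.sqrt (Real.log (2/δ) / (2 * r))) * φ * frobSq A
      then ∏ i, ptilde (s i) else 0 := by
  obtain ⟨hδ0, hδ1⟩ := hδ
  have hφ0 : 0 < φ := by linarith
  have hφF : 0 < φ * frobSq A := mul_pos hφ0 (frobSq_pos hA)
  have := isProbabilityMeasure_discreteMeasure hpt_nonneg hpt_sum
  have hshift : |(Fintype.card (Fin r) : ℝ) * ∫ k, sketchRowWeight A r p k ∂discreteMeasure ptilde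
      - frobSq A| ≤ (2 * ε + √(log (2 / δ) / (2 * r))) * φ * frobSq A
        - √(log (2 / δ) / (2 * r)) * (φ * frobSq A) := by
    rw [integral_discreteMeasure hpt_nonneg, Fintype.card_fin]
    refine (abs_mul_sum_mul_sketchRowWeight_sub_le hφ0 hA hp_over hr ptilde).trans ?_
    have := mul_le_mul_of_nonneg_right (show ∑ k, |ptilde k - p k| ≤ 2 * ε by linarith)
      hφF.le
    linarith
  have hconc := one_sub_le_measureReal_pi_abs_sum_sub_le (ι := Fin r)
    (ν := discreteMeasure ptilde) (measurable_of_finite _)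
    (sketchRowWeight_mem_Icc hφ0 hA hp_over r) (mul_nonneg (sqrt_nonneg _) hφF.le) hshift
  rw [Fintype.card_fin, sub_zero,
    two_mul_exp_hoeffding_exponent_at_sqrt_log hr hφF.ne' hδ0 (by linarith),
    measureReal_pi_discreteMeasure hpt_nonneg] at hconc
  simpa only [frobSq_sketchMatrix_mul] using hconc

/-- **Concentration of `‖SA‖_F²` for an approximate importance sketch.**
With `S` an `(r,ε,φ)`-approximate importance matrix sketch of a nonzero `A` (rows sampled
i.i.d. from `p̃` with `‖p̃−p‖_TV ≤ ε` and `p(i) ≥ (1/φ)‖A(i,·)‖²/‖A‖_F²`), for any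
`δ ∈ (0,1]`, with probability at least `1−δ` over the samples,
`|‖SA‖_F² − ‖A‖_F²| ≤ (2ε + √(ln(2/δ)/(2r)))·φ·‖A‖_F²`. -/
theorem approx_importance_sketch_frobenius_concentration
    (m n r : ℕ) (hr : 1 ≤ r) (hrm : r ≤ m)
    (A : Matrix (Fin m) (Fin n) ℂ) (hA : A ≠ 0)
    (ε : ℝ) (hε : ε ∈ Set.Icc (0:ℝ) 1) (φ : ℝ) (hφ : 1 ≤ φ)
    (δ : ℝ) (hδ : δ ∈ Set.Ioc (0:ℝ) 1)
    (p ptilde : Fin m → ℝ)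
    (hp_nonneg : ∀ i, 0 ≤ p i) (hp_sum : ∑ i, p i = 1)
    (hpt_nonneg : ∀ i, 0 ≤ ptilde i) (hpt_sum : ∑ i, ptilde i = 1)
    (hp_over : ∀ i, (1 / φ) * (rowNormSq A i / frobSq A) ≤ p i)
    (hTV : (1/2) * ∑ i, |ptilde i - p i| ≤ ε) :
    1 - δ ≤ ∑ s : Fin r → Fin m,
      if |frobSq (sketchMatrix r p s * A) - frobSq A|
          ≤ (2 * ε + Real.sqrt (Real.log (2/δ) / (2 * r))) * φ * frobSq A
      then ∏ i, ptilde (s i) else 0 :=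
  approx_importance_sketch_frobenius_concentration_general m n r hr A hA ε φ hφ δ hδ p ptilde
    hpt_nonneg hpt_sum hp_over hTV
end

section
/- Biased matrix multiplication sketch (expectation bound): Let X ∈ ℂ^{m×n}, Y ∈ ℂ^{m×n'} be nonzero matrices, ε ∈ [0,1], φ ≥ 1, and define Γ = {j ∈ {1,…,m} : ‖Y(j,·)‖ ≥ (‖Y‖_F/(√(2φε)‖X‖_F))·‖X(j,·)‖}. Let Σ be an (r, ε, φ)-approximate importance matrix sketch of X and let Σ̄ be obtained by zeroing each row i of Σ whose sampled index s_i lies in Γ. Then ‖E[X† Σ̄† Σ̄ Y] − X† Y‖_F ≤ 2√(2φε)·‖X‖_F·‖Y‖_F. -/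
/-!
Write `K = √(2φε)`. The sketch Gram matrix `Σ̄ᴴ Σ̄` is diagonal, and averaging it over the i.i.d.
samples gives `E[Xᴴ Σ̄ᴴ Σ̄ Y] - Xᴴ Y = Xᴴ diag(c) Y` with `c j = p̃ j / p j - 1` on kept rows and
`c j = -1` on truncated ones. Splitting `Xᴴ diag(c) Y` into the rank-one terms
`c j • X(j,·)ᴴ Y(j,·)` bounds its Frobenius norm by `∑ |c j| ‖X(j,·)‖ ‖Y(j,·)‖`. On a truncated row
the definition of `Γ` gives `‖Y‖_F ‖X(j,·)‖ ≤ K ‖X‖_F ‖Y(j,·)‖`, so these rows contribute at most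
`K ‖X‖_F ‖Y‖_F` (a row with `p j ≤ 0` also counts as truncated, and there the importance bound
forces `X(j,·) = 0`). On a kept row the reverse inequality and the importance bound
`‖X(j,·)‖² ≤ φ ‖X‖_F² p j` give `K ‖X(j,·)‖ ‖Y(j,·)‖ ≤ φ ‖X‖_F ‖Y‖_F p j`, and since
`∑ |p̃ j - p j| ≤ 2ε = K² / φ` these rows contribute at most `K ‖X‖_F ‖Y‖_F` as well.
-/

open Finset Matrix

/-- Euclidean norm of row `i` of a matrix. -/
noncomputable def rowNorm {m n : ℕ} (A : Matrix (Fin m) (Fin n) ℂ) (i : Fin m) : ℝ :=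
  Real.sqrt (∑ j, ‖A i j‖ ^ 2)

/-- Frobenius norm of a matrix. -/
noncomputable def frobNorm {m n : ℕ} (A : Matrix (Fin m) (Fin n) ℂ) : ℝ :=
  Real.sqrt (∑ i, ∑ j, ‖A i j‖ ^ 2)

/-- The truncated sketch matrix: row `i` equals `e_{s i}/√(r·p(s i))` when `p (s i) > 0` and
the sampled index `s i` does not lie in the truncation set `Γ`, and is zero otherwise. -/
noncomputable def truncSketch {m : ℕ} (r : ℕ) (p : Fin m → ℝ) (Γ : Fin m → Prop)
    [DecidablePred Γ] (s : Fin r → Fin m) : Matrix (Fin r) (Fin m) ℂ :=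
  Matrix.of fun i j =>
    if j = s i ∧ 0 < p (s i) ∧ ¬ Γ (s i) then ((1 / Real.sqrt (r * p (s i)) : ℝ) : ℂ) else 0

open scoped Matrix.Norms.Frobenius

lemma Matrix.norm_vecMulVec_le {𝕜 m n : Type*} [RCLike 𝕜] [Fintype m] [Fintype n]
    (u : m → 𝕜) (v : n → 𝕜) :
    ‖vecMulVec u v‖ ≤ ‖WithLp.toLp 2 u‖ * ‖WithLp.toLp 2 v‖ := by
  rw [vecMulVec_eq Unit, ← frobenius_norm_replicateCol (ι := Unit) u,
    ← frobenius_norm_replicateRow (ι := Unit) v]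
  exact frobenius_norm_mul _ _

lemma Matrix.conjTranspose_mul_diagonal_mul_eq_sum {R m n n' : Type*} [CommSemiring R]
    [StarRing R] [Fintype m] [DecidableEq m]
    (X : Matrix m n R) (c : m → R) (Y : Matrix m n' R) :
    Xᴴ * diagonal c * Y = ∑ j, c j • vecMulVec (star (X j)) (Y j) := by
  ext a b
  rw [mul_apply, sum_apply]
  refine sum_congr rfl fun j _ => ?_
  simp only [mul_diagonal, conjTranspose_apply, smul_apply, vecMulVec_apply, Pi.star_apply,
    smul_eq_mul]
  ring

section Norms

variable {m n n' : ℕ}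

lemma frobNorm_eq_norm (A : Matrix (Fin m) (Fin n) ℂ) : frobNorm A = ‖A‖ := by
  simp [frobNorm, frobenius_norm_def, Real.sqrt_eq_rpow]

lemma rowNorm_eq_norm (A : Matrix (Fin m) (Fin n) ℂ) (i : Fin m) :
    rowNorm A i = ‖WithLp.toLp 2 (A i)‖ := by
  rw [PiLp.norm_eq_of_L2]; rfl

lemma rowNorm_nonneg (A : Matrix (Fin m) (Fin n) ℂ) (i : Fin m) : 0 ≤ rowNorm A i :=
  Real.sqrt_nonneg _

lemma frobNorm_nonneg (A : Matrix (Fin m) (Fin n) ℂ) : 0 ≤ frobNorm A :=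
  Real.sqrt_nonneg _

lemma frobNorm_pos {A : Matrix (Fin m) (Fin n) ℂ} (hA : A ≠ 0) : 0 < frobNorm A := by
  rw [frobNorm_eq_norm]; exact norm_pos_iff.mpr hA

lemma sum_rowNorm_sq (A : Matrix (Fin m) (Fin n) ℂ) : ∑ i, rowNorm A i ^ 2 = frobNorm A ^ 2 := by
  simp only [rowNorm, frobNorm]
  rw [Real.sq_sqrt (by positivity)]
  exact sum_congr rfl fun i _ => Real.sq_sqrt (by positivity)

lemma frobNorm_conjTranspose_mul_diagonal_mul_le (X : Matrix (Fin m) (Fin n) ℂ) (c : Fin m → ℝ)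
    (Y : Matrix (Fin m) (Fin n') ℂ) :
    frobNorm (Xᴴ * diagonal (fun j => (c j : ℂ)) * Y) ≤ ∑ j, |c j| * rowNorm X j * rowNorm Y j := by
  rw [frobNorm_eq_norm, conjTranspose_mul_diagonal_mul_eq_sum]
  refine (norm_sum_le _ _).trans (sum_le_sum fun j _ => ?_)
  rw [norm_smul, Complex.norm_real, Real.norm_eq_abs, mul_assoc]
  gcongr
  refine (norm_vecMulVec_le _ _).trans_eq ?_
  simp [rowNorm_eq_norm, PiLp.norm_eq_of_L2]

end Norms

section Expectation

variable {ι α R : Type*} [Fintype ι] [DecidableEq ι] [Fintype α] [CommSemiring R]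

lemma Fintype.sum_prod_mul_apply_of_sum_eq_one {w : α → R} (hw : ∑ a, w a = 1) (g : α → R)
    (i₀ : ι) :
    ∑ s : ι → α, (∏ i, w (s i)) * g (s i₀) = ∑ a, w a * g a := by
  have hfactor : ∀ s : ι → α, (∏ i, w (s i)) * g (s i₀)
      = ∏ i, if i = i₀ then w (s i) * g (s i) else w (s i) := by
    intro s
    have hg : g (s i₀) = ∏ i, if i = i₀ then g (s i) else 1 := by simp
    rw [hg, ← prod_mul_distrib]
    refine Finset.prod_congr rfl fun i _ => ?_
    split_ifs <;> simp
  simp_rw [hfactor]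
  rw [← Fintype.prod_sum fun i a => if i = i₀ then w a * g a else w a]
  simp [hw]

lemma Fintype.sum_prod_mul_sum_apply_of_sum_eq_one {w : α → R} (hw : ∑ a, w a = 1) (g : α → R) :
    ∑ s : ι → α, (∏ i, w (s i)) * ∑ i, g (s i) = Fintype.card ι * ∑ a, w a * g a := by
  simp_rw [mul_sum]
  rw [sum_comm]
  simp [sum_prod_mul_apply_of_sum_eq_one hw, mul_sum]

end Expectation

section Sketch

variable {m : ℕ} (r : ℕ) (p : Fin m → ℝ) (Γ : Fin m → Prop) [DecidablePred Γ]

noncomputable def truncSketchWeight (j : Fin m) : ℝ :=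
  if 0 < p j ∧ ¬ Γ j then ((r : ℝ) * p j)⁻¹ else 0

lemma truncSketch_conjTranspose_mul_self (s : Fin r → Fin m) :
    (truncSketch r p Γ s)ᴴ * truncSketch r p Γ s
      = diagonal fun j => ∑ i, if s i = j then (truncSketchWeight r p Γ j : ℂ) else 0 := by
  ext j k
  simp only [mul_apply, conjTranspose_apply, truncSketch, of_apply, diagonal_apply,
    truncSketchWeight]
  by_cases hjk : j = k
  · subst hjk
    rw [if_pos rfl]
    refine sum_congr rfl fun i _ => ?_
    by_cases hj : j = s i
    · subst hj
      by_cases hkept : 0 < p (s i) ∧ ¬ Γ (s i)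
      · have hrp : (0 : ℝ) ≤ r * p (s i) := by have := hkept.1; positivity
        rw [if_pos ⟨rfl, hkept⟩, if_pos hkept, Complex.star_def, Complex.conj_ofReal,
          ← Complex.ofReal_mul, one_div, ← mul_inv, Real.mul_self_sqrt hrp, if_pos rfl]
      · simp [hkept]
    · simp [hj, Ne.symm hj]
  · rw [if_neg hjk]
    refine sum_eq_zero fun i _ => ?_
    by_cases hj : j = s i
    · simp [show k ≠ s i from fun hk => hjk (hj.trans hk.symm)]
    · simp [hj]

lemma sum_prod_smul_truncSketch_conjTranspose_mul_self {w : Fin m → ℝ} (hw : ∑ j, w j = 1) :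
    ∑ s : Fin r → Fin m, ((∏ i, w (s i) : ℝ) : ℂ) • ((truncSketch r p Γ s)ᴴ * truncSketch r p Γ s)
      = diagonal fun j => ((r * w j * truncSketchWeight r p Γ j : ℝ) : ℂ) := by
  have hw' : ∑ j, (w j : ℂ) = 1 := by exact_mod_cast hw
  ext j k
  simp only [truncSketch_conjTranspose_mul_self, Matrix.sum_apply, Matrix.smul_apply,
    diagonal_apply, smul_eq_mul]
  split_ifs with hjk
  · push_cast
    simpa [mul_assoc] using Fintype.sum_prod_mul_sum_apply_of_sum_eq_one (ι := Fin r) hw'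
      fun a => if a = j then (truncSketchWeight r p Γ j : ℂ) else 0
  · simp

end Sketch

section Bias

variable {m n n' : ℕ} (r : ℕ) (p : Fin m → ℝ) (Γ : Fin m → Prop) [DecidablePred Γ]

noncomputable def truncSketchBias (ptilde : Fin m → ℝ) (j : Fin m) : ℝ :=
  (if 0 < p j ∧ ¬ Γ j then ptilde j / p j else 0) - 1

lemma truncSketch_expectation_sub_eq (hr : r ≠ 0) {ptilde : Fin m → ℝ}
    (hpt_sum : ∑ j, ptilde j = 1) (X : Matrix (Fin m) (Fin n) ℂ) (Y : Matrix (Fin m) (Fin n') ℂ) :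
    (∑ s : Fin r → Fin m, ((∏ i, ptilde (s i) : ℝ) : ℂ) •
        (Xᴴ * (truncSketch r p Γ s)ᴴ * (truncSketch r p Γ s * Y))) - Xᴴ * Y
      = Xᴴ * diagonal (fun j => (truncSketchBias p Γ ptilde j : ℂ)) * Y := by
  have hgram : ∀ s : Fin r → Fin m, ((∏ i, ptilde (s i) : ℝ) : ℂ) •
        (Xᴴ * (truncSketch r p Γ s)ᴴ * (truncSketch r p Γ s * Y))
      = Xᴴ * (((∏ i, ptilde (s i) : ℝ) : ℂ) • ((truncSketch r p Γ s)ᴴ * truncSketch r p Γ s))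
          * Y := by
    intro s
    rw [Matrix.mul_smul, Matrix.smul_mul]
    simp only [Matrix.mul_assoc]
  have hbias : (diagonal fun j => ((r * ptilde j * truncSketchWeight r p Γ j : ℝ) : ℂ)) - 1
      = diagonal fun j => (truncSketchBias p Γ ptilde j : ℂ) := by
    rw [← diagonal_one, diagonal_sub]
    congr 1; funext j
    have hr' : (r : ℝ) ≠ 0 := Nat.cast_ne_zero.mpr hr
    unfold truncSketchWeight truncSketchBias
    split_ifs with hkept
    · push_cast
      field_simp
    · simp only [mul_zero, Complex.ofReal_zero, zero_sub, Complex.ofReal_neg, Complex.ofReal_one]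
  rw [sum_congr rfl fun s _ => hgram s, ← Matrix.sum_mul, ← Matrix.mul_sum,
    sum_prod_smul_truncSketch_conjTranspose_mul_self r p Γ hpt_sum]
  rw [← hbias, Matrix.mul_sub, Matrix.sub_mul, Matrix.mul_one]

end Bias

section Bounds

variable {m n n' : ℕ} {X : Matrix (Fin m) (Fin n) ℂ} {Y : Matrix (Fin m) (Fin n') ℂ}
  {φ ε : ℝ} {p ptilde : Fin m → ℝ} {Γ : Fin m → Prop} [DecidablePred Γ]

lemma rowNorm_sq_le_of_importance (hφ : 0 < φ) (hX : X ≠ 0) {j : Fin m}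
    (hp : (1 / φ) * (rowNorm X j ^ 2 / frobNorm X ^ 2) ≤ p j) :
    rowNorm X j ^ 2 ≤ φ * frobNorm X ^ 2 * p j := by
  have hfX := frobNorm_pos hX
  calc rowNorm X j ^ 2 = φ * frobNorm X ^ 2 * ((1 / φ) * (rowNorm X j ^ 2 / frobNorm X ^ 2)) := by
        field_simp
    _ ≤ φ * frobNorm X ^ 2 * p j := by gcongr

lemma sum_truncated_rowNorm_mul_le {K : ℝ} (hK : 0 ≤ K) (hφ : 0 < φ) (hX : X ≠ 0) (hY : Y ≠ 0)
    (hp_over : ∀ j, (1 / φ) * (rowNorm X j ^ 2 / frobNorm X ^ 2) ≤ p j)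
    (hΓ : ∀ j, Γ j → frobNorm Y * rowNorm X j ≤ K * frobNorm X * rowNorm Y j) :
    ∑ j ∈ univ.filter (fun j => ¬ (0 < p j ∧ ¬ Γ j)), rowNorm X j * rowNorm Y j
      ≤ K * frobNorm X * frobNorm Y := by
  have hfX := frobNorm_nonneg X
  have hfY := frobNorm_pos hY
  have hrow : ∀ j ∈ univ.filter (fun j => ¬ (0 < p j ∧ ¬ Γ j)),
      frobNorm Y * (rowNorm X j * rowNorm Y j) ≤ K * frobNorm X * rowNorm Y j ^ 2 := by
    intro j hj
    have hXj := rowNorm_nonneg X j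
    have hYj := rowNorm_nonneg Y j
    rcases not_and_or.mp (mem_filter.mp hj).2 with hpj | hΓj
    · have hsq : rowNorm X j ^ 2 ≤ 0 :=
        (rowNorm_sq_le_of_importance hφ hX (hp_over j)).trans
          (mul_nonpos_of_nonneg_of_nonpos (by positivity) (not_lt.mp hpj))
      have hXj0 : rowNorm X j = 0 := pow_eq_zero_iff two_ne_zero |>.mp (hsq.antisymm (sq_nonneg _))
      rw [hXj0, zero_mul, mul_zero]
      positivity
    · nlinarith [hΓ j (not_not.mp hΓj)]
  refine le_of_mul_le_mul_left ?_ hfY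
  calc frobNorm Y * ∑ j ∈ univ.filter (fun j => ¬ (0 < p j ∧ ¬ Γ j)), rowNorm X j * rowNorm Y j
      ≤ ∑ j ∈ univ.filter (fun j => ¬ (0 < p j ∧ ¬ Γ j)), K * frobNorm X * rowNorm Y j ^ 2 := by
        rw [mul_sum]; exact sum_le_sum hrow
    _ ≤ ∑ j, K * frobNorm X * rowNorm Y j ^ 2 :=
        sum_le_sum_of_subset_of_nonneg (filter_subset _ _) fun _ _ _ => by positivity
    _ = frobNorm Y * (K * frobNorm X * frobNorm Y) := by
        rw [← mul_sum, sum_rowNorm_sq]; ring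

lemma mul_rowNorm_mul_le_of_kept {K : ℝ} (hφ : 0 < φ) (hX : X ≠ 0) {j : Fin m}
    (hp : (1 / φ) * (rowNorm X j ^ 2 / frobNorm X ^ 2) ≤ p j)
    (hlt : K * frobNorm X * rowNorm Y j < frobNorm Y * rowNorm X j) :
    K * (rowNorm X j * rowNorm Y j) ≤ φ * frobNorm X * frobNorm Y * p j := by
  have hfX := frobNorm_pos hX
  have hfY := frobNorm_nonneg Y
  have hXj := rowNorm_nonneg X j
  refine le_of_mul_le_mul_left ?_ hfX
  calc frobNorm X * (K * (rowNorm X j * rowNorm Y j))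
      = rowNorm X j * (K * frobNorm X * rowNorm Y j) := by ring
    _ ≤ rowNorm X j * (frobNorm Y * rowNorm X j) := by gcongr
    _ = frobNorm Y * rowNorm X j ^ 2 := by ring
    _ ≤ frobNorm Y * (φ * frobNorm X ^ 2 * p j) := by
        gcongr; exact rowNorm_sq_le_of_importance hφ hX hp
    _ = frobNorm X * (φ * frobNorm X * frobNorm Y * p j) := by ring

lemma sum_kept_rowNorm_mul_le (hφ : 0 < φ) (hX : X ≠ 0)
    (hp_over : ∀ j, (1 / φ) * (rowNorm X j ^ 2 / frobNorm X ^ 2) ≤ p j)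
    (hTV : (1 / 2) * ∑ j, |ptilde j - p j| ≤ ε)
    (hΓ : ∀ j,
      frobNorm Y * rowNorm X j ≤ Real.sqrt (2 * φ * ε) * frobNorm X * rowNorm Y j → Γ j) :
    ∑ j ∈ univ.filter (fun j => 0 < p j ∧ ¬ Γ j),
        |ptilde j - p j| / p j * (rowNorm X j * rowNorm Y j)
      ≤ Real.sqrt (2 * φ * ε) * frobNorm X * frobNorm Y := by
  set K := Real.sqrt (2 * φ * ε)
  have hfX := frobNorm_pos hX
  have hrow : ∀ j ∈ univ.filter (fun j => 0 < p j ∧ ¬ Γ j),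
      K * (rowNorm X j * rowNorm Y j) ≤ φ * frobNorm X * frobNorm Y * p j := fun j hj =>
    mul_rowNorm_mul_le_of_kept hφ hX (hp_over j) (lt_of_not_ge (mt (hΓ j) (mem_filter.mp hj).2.2))
  rcases (Real.sqrt_nonneg (2 * φ * ε)).eq_or_lt with hK0 | hKpos
  · have hε : ε ≤ 0 := by
      have : 2 * φ * ε ≤ 0 := Real.sqrt_eq_zero'.mp hK0.symm
      nlinarith
    have hsum : ∑ j, |ptilde j - p j| ≤ 0 := by linarith
    have hdev : ∀ j, |ptilde j - p j| = 0 := fun j =>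
      (sum_eq_zero_iff_of_nonneg fun j _ => abs_nonneg _).mp
        (hsum.antisymm (sum_nonneg fun j _ => abs_nonneg _)) j (mem_univ j)
    simp only [hdev, zero_div, zero_mul, sum_const_zero]
    exact mul_nonneg (mul_nonneg hK0.le hfX.le) (frobNorm_nonneg Y)
  · have hKK : K * K = 2 * φ * ε := Real.mul_self_sqrt (Real.sqrt_pos.mp hKpos).le
    have hfY := frobNorm_nonneg Y
    refine le_of_mul_le_mul_left ?_ hKpos
    calc K * ∑ j ∈ univ.filter (fun j => 0 < p j ∧ ¬ Γ j),
          |ptilde j - p j| / p j * (rowNorm X j * rowNorm Y j)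
        = ∑ j ∈ univ.filter (fun j => 0 < p j ∧ ¬ Γ j),
          |ptilde j - p j| / p j * (K * (rowNorm X j * rowNorm Y j)) := by
          rw [mul_sum]; exact sum_congr rfl fun j _ => by ring
      _ ≤ ∑ j ∈ univ.filter (fun j => 0 < p j ∧ ¬ Γ j),
          |ptilde j - p j| / p j * (φ * frobNorm X * frobNorm Y * p j) :=
          sum_le_sum fun j hj => mul_le_mul_of_nonneg_left (hrow j hj)
            (div_nonneg (abs_nonneg _) (mem_filter.mp hj).2.1.le)
      _ = ∑ j ∈ univ.filter (fun j => 0 < p j ∧ ¬ Γ j),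
          |ptilde j - p j| * (φ * frobNorm X * frobNorm Y) := by
          refine sum_congr rfl fun j hj => ?_
          have := (mem_filter.mp hj).2.1.ne'
          field_simp
      _ ≤ ∑ j, |ptilde j - p j| * (φ * frobNorm X * frobNorm Y) :=
          sum_le_sum_of_subset_of_nonneg (filter_subset _ _) fun _ _ _ => by positivity
      _ ≤ 2 * ε * (φ * frobNorm X * frobNorm Y) := by
          rw [← sum_mul]; gcongr; linarith
      _ = K * (K * frobNorm X * frobNorm Y) := by
          linear_combination (-(frobNorm X * frobNorm Y)) * hKK

lemma sum_abs_truncSketchBias_mul_le (hφ : 0 < φ) (hX : X ≠ 0) (hY : Y ≠ 0)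
    (hp_over : ∀ j, (1 / φ) * (rowNorm X j ^ 2 / frobNorm X ^ 2) ≤ p j)
    (hTV : (1 / 2) * ∑ j, |ptilde j - p j| ≤ ε)
    (hΓ : ∀ j, Γ j ↔
      frobNorm Y * rowNorm X j ≤ Real.sqrt (2 * φ * ε) * frobNorm X * rowNorm Y j) :
    ∑ j, |truncSketchBias p Γ ptilde j| * rowNorm X j * rowNorm Y j
      ≤ 2 * Real.sqrt (2 * φ * ε) * frobNorm X * frobNorm Y := by
  rw [← sum_filter_add_sum_filter_not univ fun j => 0 < p j ∧ ¬ Γ j]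
  have hkept : ∀ j ∈ univ.filter (fun j => 0 < p j ∧ ¬ Γ j),
      |truncSketchBias p Γ ptilde j| * rowNorm X j * rowNorm Y j
        = |ptilde j - p j| / p j * (rowNorm X j * rowNorm Y j) := by
    intro j hj
    have hpj := (mem_filter.mp hj).2
    rw [truncSketchBias, if_pos hpj, div_sub_one hpj.1.ne', abs_div, abs_of_pos hpj.1, mul_assoc]
  have htruncated : ∀ j ∈ univ.filter (fun j => ¬ (0 < p j ∧ ¬ Γ j)),
      |truncSketchBias p Γ ptilde j| * rowNorm X j * rowNorm Y j
        = rowNorm X j * rowNorm Y j := by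
    intro j hj
    rw [truncSketchBias, if_neg (mem_filter.mp hj).2, zero_sub, abs_neg, abs_one, one_mul]
  rw [sum_congr rfl hkept, sum_congr rfl htruncated]
  linarith [sum_kept_rowNorm_mul_le hφ hX hp_over hTV fun j => (hΓ j).2,
    sum_truncated_rowNorm_mul_le (Real.sqrt_nonneg _) hφ hX hY hp_over fun j => (hΓ j).1]

end Bounds

theorem biased_matrix_mult_sketch_expectation_general
    (m n n' r : ℕ) (hr : 1 ≤ r)
    (X : Matrix (Fin m) (Fin n) ℂ) (Y : Matrix (Fin m) (Fin n') ℂ)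
    (hX : X ≠ 0) (hY : Y ≠ 0)
    (ε : ℝ) (φ : ℝ) (hφ : 1 ≤ φ)
    (p ptilde : Fin m → ℝ)
    (hpt_sum : ∑ j, ptilde j = 1)
    (hp_over : ∀ j, (1 / φ) * (rowNorm X j ^ 2 / frobNorm X ^ 2) ≤ p j)
    (hTV : (1/2) * ∑ j, |ptilde j - p j| ≤ ε)
    (Γ : Fin m → Prop) [DecidablePred Γ]
    (hΓ : ∀ j, Γ j ↔ frobNorm Y * rowNorm X j ≤ Real.sqrt (2 * φ * ε) * frobNorm X * rowNorm Y j) :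
    frobNorm
      ((∑ s : Fin r → Fin m, ((∏ i, ptilde (s i) : ℝ) : ℂ) •
          (Xᴴ * (truncSketch r p Γ s)ᴴ * (truncSketch r p Γ s * Y)))
        - Xᴴ * Y)
      ≤ 2 * Real.sqrt (2 * φ * ε) * frobNorm X * frobNorm Y := by
  rw [truncSketch_expectation_sub_eq r p Γ (by omega) hpt_sum X Y]
  exact (frobNorm_conjTranspose_mul_diagonal_mul_le X _ Y).trans
    (sum_abs_truncSketchBias_mul_le (by linarith) hX hY hp_over hTV hΓ)

/-- **Biased matrix multiplication sketch: expectation bound.**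
Let `X ∈ ℂ^{m×n}`, `Y ∈ ℂ^{m×n'}` be nonzero, `ε ∈ [0,1]`, `φ ≥ 1`, and
`Γ = {j : ‖Y(j,·)‖ ≥ (‖Y‖_F/(√(2φε)‖X‖_F))·‖X(j,·)‖}` (written multiplied out).  Let `Σ`
be an `(r,ε,φ)`-approximate importance sketch of `X` (samples i.i.d. from `p̃` with
`‖p̃−p‖_TV ≤ ε` and `p(j) ≥ (1/φ)‖X(j,·)‖²/‖X‖_F²`) and `Σ̄` the sketch with the rows whose
sampled index lies in `Γ` zeroed out.  Then
`‖E[X† Σ̄† Σ̄ Y] − X† Y‖_F ≤ 2√(2φε)·‖X‖_F·‖Y‖_F`. -/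
theorem biased_matrix_mult_sketch_expectation
    (m n n' r : ℕ) (hr : 1 ≤ r)
    (X : Matrix (Fin m) (Fin n) ℂ) (Y : Matrix (Fin m) (Fin n') ℂ)
    (hX : X ≠ 0) (hY : Y ≠ 0)
    (ε : ℝ) (hε : ε ∈ Set.Icc (0:ℝ) 1) (φ : ℝ) (hφ : 1 ≤ φ)
    (p ptilde : Fin m → ℝ)
    (hp_nonneg : ∀ j, 0 ≤ p j) (hp_sum : ∑ j, p j = 1)
    (hpt_nonneg : ∀ j, 0 ≤ ptilde j) (hpt_sum : ∑ j, ptilde j = 1)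
    (hp_over : ∀ j, (1 / φ) * (rowNorm X j ^ 2 / frobNorm X ^ 2) ≤ p j)
    (hTV : (1/2) * ∑ j, |ptilde j - p j| ≤ ε)
    (Γ : Fin m → Prop) [DecidablePred Γ]
    (hΓ : ∀ j, Γ j ↔ frobNorm Y * rowNorm X j ≤ Real.sqrt (2 * φ * ε) * frobNorm X * rowNorm Y j) :
    frobNorm
      ((∑ s : Fin r → Fin m, ((∏ i, ptilde (s i) : ℝ) : ℂ) •
          (Xᴴ * (truncSketch r p Γ s)ᴴ * (truncSketch r p Γ s * Y)))
        - Xᴴ * Y)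
      ≤ 2 * Real.sqrt (2 * φ * ε) * frobNorm X * frobNorm Y :=
  biased_matrix_mult_sketch_expectation_general m n n' r hr X Y hX hY ε φ hφ p ptilde hpt_sum
    hp_over hTV Γ hΓ
end

section
/- Robust rejection sampling produces an output distribution close to the target: Let p₁, p₂ be probability distributions on {1,…,n}, m > 0 with p₁(j) ≤ m·p₂(j) for all j, and let p̃₂ be a distribution with ‖p̃₂ − p₂‖_TV ≤ ε where ε ∈ [0, 1/(2m)]. Define the acceptance probability p_acc = Σⱼ p̃₂(j)·p₁(j)/(m p₂(j)). Then |p_acc − 1/m| ≤ ε, hence p_acc ∈ [(1−εm)/m, (1+εm)/m], and the conditional output distribution p̂(j) = p̃₂(j)p₁(j)/(m·p_acc·p₂(j)) satisfies ‖p̂ − p₁‖_TV ≤ 3εm. -/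
open Finset

/-!
Write `r j = p₁(j) / (m p₂(j)) ∈ [0, 1]`, so that `p₁ = m p₂ r`, `∑ p₂ r = 1/m` and
`p_acc = ∑ p̃₂ r`. Shifting `r` by `1/2` (allowed since `p̃₂ - p₂` sums to `0`) bounds
`|p_acc - 1/m|` by the total variation distance. For the output distribution, split
`p̃₂ r / p_acc - m p₂ r = (p̃₂ - p₂) r / p_acc + p₂ r (1/p_acc - m)`: the two parts contribute
at most `2ε / p_acc` and `ε / p_acc`, and `p_acc ≥ 1/m - ε ≥ 1/(2m)`.
-/

section

variable {ι : Type*} [Fintype ι]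

theorem abs_sum_mul_sub_sum_mul_le_s11 {p q f : ι → ℝ} (hpq : ∑ i, p i = ∑ i, q i)
    (hf₀ : ∀ i, 0 ≤ f i) (hf₁ : ∀ i, f i ≤ 1) :
    |∑ i, p i * f i - ∑ i, q i * f i| ≤ (1/2) * ∑ i, |p i - q i| := by
  have hshift : ∑ i, p i * f i - ∑ i, q i * f i = ∑ i, (p i - q i) * (f i - 1/2) := by
    simp only [sub_mul, mul_sub, sum_sub_distrib, ← sum_mul, hpq]
    ring
  rw [hshift, mul_sum]
  refine (abs_sum_le_sum_abs _ _).trans (sum_le_sum fun i _ => ?_)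
  rw [abs_mul, mul_comm]
  gcongr
  exact abs_le.mpr ⟨by linarith [hf₀ i], by linarith [hf₁ i]⟩

theorem sum_abs_mul_div_sub_le {p p' r : ι → ℝ} {a m : ℝ} (ha : 0 < a) (hm : 0 < m)
    (hp : ∀ i, 0 ≤ p i) (hr₀ : ∀ i, 0 ≤ r i) (hr₁ : ∀ i, r i ≤ 1)
    (hsum : ∑ i, p i * r i = 1/m) :
    ∑ i, |p' i * r i / a - m * p i * r i| ≤ (∑ i, |p' i - p i| + |a - 1/m|) / a := by
  have hsplit : ∀ i, p' i * r i / a - m * p i * r i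
      = (p' i - p i) * r i / a + p i * r i * (1/a - m) := fun i => by
    field_simp
    ring
  have hsecond : ∑ i, |p i * r i * (1/a - m)| = |a - 1/m| / a := by
    have hfactor : 1/a - m = (1/m - a) * (m/a) := by field_simp
    simp only [abs_mul, abs_of_nonneg (hp _), abs_of_nonneg (hr₀ _), ← sum_mul, hsum]
    rw [hfactor, abs_mul, abs_of_pos (div_pos hm ha), abs_sub_comm]
    field_simp
  calc ∑ i, |p' i * r i / a - m * p i * r i|
      ≤ ∑ i, (|(p' i - p i) * r i / a| + |p i * r i * (1/a - m)|) :=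
        sum_le_sum fun i _ => (hsplit i).symm ▸ abs_add_le _ _
    _ ≤ (∑ i, |p' i - p i|) / a + |a - 1/m| / a := by
        rw [sum_add_distrib, hsecond, sum_div]
        gcongr with i
        rw [abs_div, abs_mul, abs_of_pos ha, abs_of_nonneg (hr₀ i)]
        gcongr
        exact mul_le_of_le_one_right (abs_nonneg _) (hr₁ i)
    _ = (∑ i, |p' i - p i| + |a - 1/m|) / a := (add_div _ _ _).symm

theorem sum_mul_div_mul_eq_one_div {p q : ι → ℝ} {m : ℝ} (hm : m ≠ 0) (hq : ∀ i, 0 ≤ q i)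
    (hqp : ∀ i, q i ≤ m * p i) (hsum : ∑ i, q i = 1) :
    ∑ i, p i * (q i / (m * p i)) = 1/m := by
  rw [eq_div_iff hm, sum_mul, ← hsum]
  refine sum_congr rfl fun i _ => ?_
  rw [mul_right_comm, mul_comm _ m]
  exact mul_div_cancel_of_imp' fun h => le_antisymm (h ▸ hqp i) (hq i)

end

theorem one_div_two_mul_le_of_abs_sub_le {a m ε : ℝ} (hm : 0 < m) (ha : |a - 1/m| ≤ ε)
    (hε : ε ≤ 1/(2*m)) : 1/(2*m) ≤ a := by
  have : 1/(2*m) = 1/m - 1/(2*m) := by field_simp; ring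
  linarith [(abs_le.mp ha).1]

theorem robust_rejection_sampling_general
    (n : ℕ) (p₁ p₂ ptilde₂ : Fin n → ℝ)
    (hp₁_nonneg : ∀ j, 0 ≤ p₁ j) (hp₁_sum : ∑ j, p₁ j = 1)
    (hp₂_nonneg : ∀ j, 0 ≤ p₂ j) (hp₂_sum : ∑ j, p₂ j = 1)
    (hpt_sum : ∑ j, ptilde₂ j = 1)
    (m : ℝ) (hm : 0 < m) (hdom : ∀ j, p₁ j ≤ m * p₂ j)
    (ε : ℝ) (hε : ε ∈ Set.Icc 0 (1/(2*m)))
    (hTV : (1/2) * ∑ j, |ptilde₂ j - p₂ j| ≤ ε)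
    (pacc : ℝ) (hpacc : pacc = ∑ j, ptilde₂ j * (p₁ j / (m * p₂ j))) :
    |pacc - 1/m| ≤ ε ∧
    pacc ∈ Set.Icc ((1 - ε*m)/m) ((1 + ε*m)/m) ∧
    (1/2) * ∑ j, |ptilde₂ j * p₁ j / (m * pacc * p₂ j) - p₁ j| ≤ 3 * ε * m := by
  obtain ⟨hε₀, hε₁⟩ := hε
  have hr₀ : ∀ j, 0 ≤ p₁ j / (m * p₂ j) := fun j =>
    div_nonneg (hp₁_nonneg j) ((hp₁_nonneg j).trans (hdom j))
  have hr₁ : ∀ j, p₁ j / (m * p₂ j) ≤ 1 := fun j =>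
    div_le_one_of_le₀ (hdom j) ((hp₁_nonneg j).trans (hdom j))
  have hcancel : ∀ j, m * p₂ j * (p₁ j / (m * p₂ j)) = p₁ j := fun j =>
    mul_div_cancel_of_imp' fun h => le_antisymm (h ▸ hdom j) (hp₁_nonneg j)
  have hsum := sum_mul_div_mul_eq_one_div hm.ne' hp₁_nonneg hdom hp₁_sum
  have hdev : |pacc - 1/m| ≤ ε := by
    rw [hpacc, ← hsum]
    exact (abs_sum_mul_sub_sum_mul_le_s11 (hpt_sum.trans hp₂_sum.symm) hr₀ hr₁).trans hTV
  have hpacc_lb := one_div_two_mul_le_of_abs_sub_le hm hdev hε₁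
  have hpacc_pos : 0 < pacc := (by positivity : (0:ℝ) < 1/(2*m)).trans_le hpacc_lb
  refine ⟨hdev, ?_, ?_⟩
  · rw [sub_div, add_div, mul_div_cancel_right₀ _ hm.ne',
      ← Set.mem_Icc_iff_abs_le, abs_sub_comm]
    exact hdev
  calc (1/2) * ∑ j, |ptilde₂ j * p₁ j / (m * pacc * p₂ j) - p₁ j|
      = (1/2) * ∑ j, |ptilde₂ j * (p₁ j / (m * p₂ j)) / pacc
          - m * p₂ j * (p₁ j / (m * p₂ j))| := by
        congr 1
        exact sum_congr rfl fun j _ => congrArg abs (by rw [hcancel j]; ring)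
    _ ≤ (1/2) * ((∑ j, |ptilde₂ j - p₂ j| + |pacc - 1/m|) / pacc) := by
        gcongr
        exact sum_abs_mul_div_sub_le hpacc_pos hm hp₂_nonneg hr₀ hr₁ hsum
    _ ≤ (1/2) * ((2 * ε + ε) / pacc) := by gcongr; linarith
    _ = 3/2 * ε * (1/pacc) := by ring
    _ ≤ 3/2 * ε * (2 * m) := by
        gcongr
        exact (one_div_le hpacc_pos (by positivity)).mpr hpacc_lb
    _ = 3 * ε * m := by ring

/-- **Robust rejection sampling.**
Let `p₁, p₂` be probability distributions on `{1,…,n}`, `m > 0` with `p₁(j) ≤ m·p₂(j)` for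
all `j`, and let `p̃₂` be a distribution with `‖p̃₂ − p₂‖_TV ≤ ε`, where `ε ∈ [0, 1/(2m)]`.
With acceptance probability `p_acc = Σⱼ p̃₂(j)·p₁(j)/(m p₂(j))` one has `|p_acc − 1/m| ≤ ε`,
hence `p_acc ∈ [(1−εm)/m, (1+εm)/m]`, and the conditional output distribution
`p̂(j) = p̃₂(j)p₁(j)/(m·p_acc·p₂(j))` satisfies `‖p̂ − p₁‖_TV ≤ 3εm`.
(Ratios with vanishing denominators are `0` by Lean's convention; this matches the paper's
convention since `p₂(j) = 0` forces `p₁(j) = 0`.) -/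
theorem robust_rejection_sampling
    (n : ℕ) (p₁ p₂ ptilde₂ : Fin n → ℝ)
    (hp₁_nonneg : ∀ j, 0 ≤ p₁ j) (hp₁_sum : ∑ j, p₁ j = 1)
    (hp₂_nonneg : ∀ j, 0 ≤ p₂ j) (hp₂_sum : ∑ j, p₂ j = 1)
    (hpt_nonneg : ∀ j, 0 ≤ ptilde₂ j) (hpt_sum : ∑ j, ptilde₂ j = 1)
    (m : ℝ) (hm : 0 < m) (hdom : ∀ j, p₁ j ≤ m * p₂ j)
    (ε : ℝ) (hε : ε ∈ Set.Icc 0 (1/(2*m)))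
    (hTV : (1/2) * ∑ j, |ptilde₂ j - p₂ j| ≤ ε)
    (pacc : ℝ) (hpacc : pacc = ∑ j, ptilde₂ j * (p₁ j / (m * p₂ j))) :
    |pacc - 1/m| ≤ ε ∧
    pacc ∈ Set.Icc ((1 - ε*m)/m) ((1 + ε*m)/m) ∧
    (1/2) * ∑ j, |ptilde₂ j * p₁ j / (m * pacc * p₂ j) - p₁ j| ≤ 3 * ε * m :=
  robust_rejection_sampling_general n p₁ p₂ ptilde₂ hp₁_nonneg hp₁_sum hp₂_nonneg hp₂_sum hpt_sum m
    hm hdom ε hε hTV pacc hpacc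
end

section
/- Supervised clustering tensorization identity: Let M ∈ ℝ^{n×d} with no all-zero row and w ∈ ℝ^{1×n}. Define u, v ∈ ℝ^{n·d·n} indexed by triples (i,j,k) by u_{i,j,k} = M(i,j)·‖M(k,·)‖ and v_{i,j,k} = wᵢ·w_k·M(k,j)/‖M(k,·)‖. Then ⟨u,v⟩ = ‖wM‖², ‖u‖ = ‖M‖_F², and ‖v‖ = ‖w‖². -/
open Finset

/-- **Supervised clustering tensorization identity.**
Let `M ∈ ℝ^{n×d}` with no all-zero row and `w ∈ ℝ^{1×n}`.  Define vectors `u, v` indexed by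
triples `(i,j,k)` by `u_{i,j,k} = M(i,j)·‖M(k,·)‖` and
`v_{i,j,k} = wᵢ·w_k·M(k,j)/‖M(k,·)‖`.  Then `⟨u,v⟩ = ‖wM‖²`, `‖u‖ = ‖M‖_F²`, and
`‖v‖ = ‖w‖²`. -/
theorem supervised_clustering_tensorization
    (n d : ℕ) (M : Matrix (Fin n) (Fin d) ℝ) (hM : ∀ i, M i ≠ 0)
    (w : Fin n → ℝ)
    (u v : Fin n × Fin d × Fin n → ℝ)
    (hu : u = fun x => M x.1 x.2.1 * Real.sqrt (∑ j, M x.2.2 j ^ 2))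
    (hv : v = fun x => w x.1 * w x.2.2 * M x.2.2 x.2.1 / Real.sqrt (∑ j, M x.2.2 j ^ 2)) :
    (∑ x, u x * v x) = ∑ j, (∑ i, w i * M i j) ^ 2 ∧
    Real.sqrt (∑ x, u x ^ 2) = ∑ i, ∑ j, M i j ^ 2 ∧
    Real.sqrt (∑ x, v x ^ 2) = ∑ i, w i ^ 2 := by
  subst hu hv
  have hS : ∀ k : Fin n, 0 < ∑ j, M k j ^ 2 := by
    intro k
    have h := hM k
    have hex : ∃ j, M k j ≠ 0 := by
      by_contra h'; push_neg at h'; exact h (funext h')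
    obtain ⟨j, hj⟩ := hex
    exact Finset.sum_pos' (fun i _ => sq_nonneg _)
      ⟨j, Finset.mem_univ j, by positivity⟩
  have hsq : ∀ k : Fin n, Real.sqrt (∑ j, M k j ^ 2) ^ 2 = ∑ j, M k j ^ 2 :=
    fun k => Real.sq_sqrt (hS k).le
  have hne : ∀ k : Fin n, Real.sqrt (∑ j, M k j ^ 2) ≠ 0 :=
    fun k => (Real.sqrt_pos.mpr (hS k)).ne'
  refine ⟨?_, ?_, ?_⟩
  · simp only [Fintype.sum_prod_type]
    have hterm : ∀ (i k : Fin n) (j : Fin d),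
        M i j * Real.sqrt (∑ j', M k j' ^ 2) *
          (w i * w k * M k j / Real.sqrt (∑ j', M k j' ^ 2)) =
        (w i * M i j) * (w k * M k j) := by
      intro i k j
      field_simp
      rw [div_eq_iff (hne k)]
      ring
    simp only [hterm]
    rw [Finset.sum_comm]
    refine Finset.sum_congr rfl fun j _ => ?_
    rw [sq, Finset.sum_mul_sum]
  · simp only [Fintype.sum_prod_type, mul_pow]
    have hterm : ∀ (i k : Fin n) (j : Fin d),
        M i j ^ 2 * Real.sqrt (∑ j', M k j' ^ 2) ^ 2 =
        M i j ^ 2 * ∑ j', M k j' ^ 2 := fun i k j => by rw [hsq]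
    simp only [hterm]
    have : (∑ i, ∑ j, ∑ k, M i j ^ 2 * ∑ j', M k j' ^ 2)
        = (∑ i, ∑ j, M i j ^ 2) * (∑ k, ∑ j', M k j' ^ 2) := by
      simp [Finset.sum_mul, Finset.mul_sum, mul_comm]
    rw [this, Real.sqrt_mul_self (by positivity)]
  · simp only [Fintype.sum_prod_type, div_pow, mul_pow]
    have hterm : ∀ (i k : Fin n) (j : Fin d),
        w i ^ 2 * w k ^ 2 * M k j ^ 2 / Real.sqrt (∑ j', M k j' ^ 2) ^ 2 =
        w i ^ 2 * (w k ^ 2 * (M k j ^ 2 / (∑ j', M k j' ^ 2))) := by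
      intro i k j
      rw [hsq]
      ring
    simp only [hterm]
    have hinner : ∀ k : Fin n,
        (∑ j, w k ^ 2 * (M k j ^ 2 / (∑ j', M k j' ^ 2))) = w k ^ 2 := by
      intro k
      rw [← Finset.mul_sum, ← Finset.sum_div, div_self (hS k).ne']
      ring
    have : (∑ i, ∑ j, ∑ k, w i ^ 2 * (w k ^ 2 * (M k j ^ 2 / (∑ j', M k j' ^ 2))))
        = (∑ i, w i ^ 2) * (∑ i, w i ^ 2) := by
      rw [Finset.sum_mul]
      refine Finset.sum_congr rfl fun i _ => ?_
      rw [Finset.sum_comm]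
      have h2 : ∀ k : Fin n, ∑ j, w i ^ 2 * (w k ^ 2 * (M k j ^ 2 / (∑ j', M k j' ^ 2)))
          = w i ^ 2 * w k ^ 2 := by
        intro k; rw [← Finset.mul_sum, hinner k]
      simp only [h2, ← Finset.mul_sum]
    rw [this, Real.sqrt_mul_self (by positivity)]
end
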